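/- arXiv:2309.10921 — 7 statements merged into one kernel-verified Lean document; each statement's English description precedes it below -/
import Mathlib

section
/- For all integers n ≥ 1 and t ≥ 0, s*(n,2,t) = 2^n · Σ_{i=0}^{t} C(n,i). That is: if 𝓕_1, 𝓕_2 are families of subsets of [n] with |F1 ∩ F2| ≤ t for all F1 ∈ 𝓕_1 and F2 ∈ 𝓕_2, then |𝓕_1|·|𝓕_2| ≤ 2^n · Σ_{i=0}^{t} C(n,i), and this bound is attained by some such pair of families. -/
/-! Fix a point `a` and split each family into the sets avoiding `a` and (with `a` removed) the
sets containing `a`. Of the four resulting pairs of families on the remaining points, three still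
have cross-intersections of size at most `t` and the pair of "containing" parts has them of size at
most `t - 1`, so induction bounds all four products. The two mixed products `u, v` are each at
most `M = 2^(n-1) Σ_{i≤t} C(n-1,i)`, and `u v` equals the product of the other two, which is at
most `M M'` with `M' = 2^(n-1) Σ_{i<t} C(n-1,i)`; hence `u + v ≤ M + M'`, and Pascal's rule turns
the total `2 (M + M')` into the bound for `n`. Equality holds for all subsets against the subsets
of size at most `t`. -/

open Finset

lemma Nat.add_le_add_of_mul_le_mul {u v M M' : ℕ} (hu : u ≤ M) (hv : v ≤ M)
    (huv : u * v ≤ M * M') : u + v ≤ M + M' := by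
  rcases Nat.eq_zero_or_pos M with hM | hM
  · omega
  · refine Nat.le_of_mul_le_mul_left ?_ hM
    nlinarith

lemma Nat.add_mul_add_le {a₀ a₁ b₀ b₁ M M' : ℕ} (h₀₀ : a₀ * b₀ ≤ M) (h₀₁ : a₀ * b₁ ≤ M)
    (h₁₀ : a₁ * b₀ ≤ M) (h₁₁ : a₁ * b₁ ≤ M') :
    (a₁ + a₀) * (b₁ + b₀) ≤ 2 * (M + M') := by
  have hmixed : a₀ * b₁ + a₁ * b₀ ≤ M + M' :=
    Nat.add_le_add_of_mul_le_mul h₀₁ h₁₀ <| calc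
      a₀ * b₁ * (a₁ * b₀) = a₀ * b₀ * (a₁ * b₁) := by ring
      _ ≤ M * M' := Nat.mul_le_mul h₀₀ h₁₁
  nlinarith

lemma Nat.sum_range_succ_choose_succ (s k : ℕ) :
    ∑ i ∈ range (k + 1), (s + 1).choose i
      = ∑ i ∈ range (k + 1), s.choose i + ∑ i ∈ range k, s.choose i := by
  rw [sum_range_succ', sum_range_succ' (fun i ↦ s.choose i)]
  simp only [Nat.choose_succ_succ, sum_add_distrib, Nat.choose_zero_right]
  ring

namespace Finset

variable {α : Type*}

lemma card_filter_card_lt_powerset (S : Finset α) (k : ℕ) :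
    #{A ∈ S.powerset | #A < k} = ∑ i ∈ range k, (#S).choose i := by
  rw [card_eq_sum_card_fiberwise (f := card) (t := range k) fun A hA ↦
    mem_range.2 (mem_filter.1 hA).2]
  refine sum_congr rfl fun i hi ↦ ?_
  rw [filter_filter, ← card_powersetCard, powersetCard_eq_filter]
  congr 1
  exact filter_congr fun A _ ↦ ⟨And.right, fun hA ↦ ⟨hA ▸ mem_range.1 hi, hA⟩⟩

variable [DecidableEq α]

/-- The strict bound `k = t + 1` lets the induction pass from `k + 1` to `k` without truncated
subtraction. -/
def CrossIntersectionsLT (k : ℕ) (𝒜 ℬ : Finset (Finset α)) : Prop :=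
  ∀ A ∈ 𝒜, ∀ B ∈ ℬ, #(A ∩ B) < k

lemma exists_superset_of_mem_nonMemberSubfamily {𝒜 : Finset (Finset α)} {a : α} {A : Finset α}
    (hA : A ∈ 𝒜.nonMemberSubfamily a) : ∃ A' ∈ 𝒜, A ⊆ A' :=
  ⟨A, (mem_nonMemberSubfamily.1 hA).1, subset_rfl⟩

lemma exists_superset_of_mem_memberSubfamily {𝒜 : Finset (Finset α)} {a : α} {A : Finset α}
    (hA : A ∈ 𝒜.memberSubfamily a) : ∃ A' ∈ 𝒜, A ⊆ A' :=
  ⟨insert a A, (mem_memberSubfamily.1 hA).1, subset_insert a A⟩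

namespace CrossIntersectionsLT

variable {k : ℕ} {𝒜 ℬ 𝒜' ℬ' : Finset (Finset α)}

lemma card_mul_card_eq_zero (h : CrossIntersectionsLT 0 𝒜 ℬ) : #𝒜 * #ℬ = 0 := by
  by_contra hne
  obtain ⟨A, hA⟩ := card_pos.1 (Nat.pos_of_mul_pos_right (Nat.pos_of_ne_zero hne))
  obtain ⟨B, hB⟩ := card_pos.1 (Nat.pos_of_mul_pos_left (Nat.pos_of_ne_zero hne))
  exact Nat.not_lt_zero _ (h A hA B hB)

lemma mono (h : CrossIntersectionsLT k 𝒜 ℬ) (h𝒜 : ∀ A' ∈ 𝒜', ∃ A ∈ 𝒜, A' ⊆ A)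
    (hℬ : ∀ B' ∈ ℬ', ∃ B ∈ ℬ, B' ⊆ B) : CrossIntersectionsLT k 𝒜' ℬ' := by
  intro A' hA' B' hB'
  obtain ⟨A, hA, hA'A⟩ := h𝒜 A' hA'
  obtain ⟨B, hB, hB'B⟩ := hℬ B' hB'
  exact (card_le_card (inter_subset_inter hA'A hB'B)).trans_lt (h A hA B hB)

lemma memberSubfamily (a : α) (h : CrossIntersectionsLT (k + 1) 𝒜 ℬ) :
    CrossIntersectionsLT k (𝒜.memberSubfamily a) (ℬ.memberSubfamily a) := by
  intro A hA B hB
  rw [mem_memberSubfamily] at hA hB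
  have := h _ hA.1 _ hB.1
  rwa [← insert_inter_distrib, card_insert_of_notMem (fun ha ↦ hA.2 (mem_inter.1 ha).1),
    Nat.add_lt_add_iff_right] at this

end CrossIntersectionsLT

lemma nonMemberSubfamily_subset_powerset {S : Finset α} {𝒜 : Finset (Finset α)} (a : α)
    (h𝒜 : 𝒜 ⊆ (insert a S).powerset) : 𝒜.nonMemberSubfamily a ⊆ S.powerset := by
  intro A hA
  rw [mem_nonMemberSubfamily] at hA
  exact mem_powerset.2 ((subset_insert_iff_of_notMem hA.2).1 (mem_powerset.1 (h𝒜 hA.1)))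

lemma memberSubfamily_subset_powerset {S : Finset α} {𝒜 : Finset (Finset α)} (a : α)
    (h𝒜 : 𝒜 ⊆ (insert a S).powerset) : 𝒜.memberSubfamily a ⊆ S.powerset := by
  intro A hA
  rw [mem_memberSubfamily] at hA
  exact mem_powerset.2 ((insert_subset_insert_iff hA.2).1 (mem_powerset.1 (h𝒜 hA.1)))

theorem card_mul_card_le_of_crossIntersectionsLT {S : Finset α} {k : ℕ}
    {𝒜 ℬ : Finset (Finset α)} (h𝒜 : 𝒜 ⊆ S.powerset) (hℬ : ℬ ⊆ S.powerset)
    (h : CrossIntersectionsLT k 𝒜 ℬ) :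
    #𝒜 * #ℬ ≤ 2 ^ #S * ∑ i ∈ range k, (#S).choose i := by
  induction S using Finset.induction generalizing k 𝒜 ℬ with
  | empty =>
    obtain _ | k := k
    · simp [h.card_mul_card_eq_zero]
    have h𝒜₁ : #𝒜 ≤ 1 := by simpa using card_le_card h𝒜
    have hℬ₁ : #ℬ ≤ 1 := by simpa using card_le_card hℬ
    simpa [sum_range_succ'] using Nat.mul_le_mul h𝒜₁ hℬ₁
  | insert a S ha ih =>
    obtain _ | k := k
    · simp [h.card_mul_card_eq_zero]
    have hnon {𝒞 : Finset (Finset α)} : ∀ C ∈ 𝒞.nonMemberSubfamily a, ∃ C' ∈ 𝒞, C ⊆ C' :=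
      fun _ ↦ exists_superset_of_mem_nonMemberSubfamily
    have hmem {𝒞 : Finset (Finset α)} : ∀ C ∈ 𝒞.memberSubfamily a, ∃ C' ∈ 𝒞, C ⊆ C' :=
      fun _ ↦ exists_superset_of_mem_memberSubfamily
    have h𝒜₀ := nonMemberSubfamily_subset_powerset a h𝒜
    have h𝒜₁ := memberSubfamily_subset_powerset a h𝒜
    have hℬ₀ := nonMemberSubfamily_subset_powerset a hℬ
    have hℬ₁ := memberSubfamily_subset_powerset a hℬ
    rw [← card_memberSubfamily_add_card_nonMemberSubfamily a 𝒜,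
      ← card_memberSubfamily_add_card_nonMemberSubfamily a ℬ, card_insert_of_notMem ha,
      Nat.sum_range_succ_choose_succ]
    calc _ ≤ 2 * (2 ^ #S * ∑ i ∈ range (k + 1), (#S).choose i
          + 2 ^ #S * ∑ i ∈ range k, (#S).choose i) :=
          Nat.add_mul_add_le (ih h𝒜₀ hℬ₀ (h.mono hnon hnon))
            (ih h𝒜₀ hℬ₁ (h.mono hnon hmem)) (ih h𝒜₁ hℬ₀ (h.mono hmem hnon))
            (ih h𝒜₁ hℬ₁ (h.memberSubfamily a))
      _ = _ := by ring

lemma crossIntersectionsLT_powerset_filter_card_lt (S : Finset α) (k : ℕ) :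
    CrossIntersectionsLT k S.powerset {B ∈ S.powerset | #B < k} := fun _ _ _ hB ↦
  (card_le_card inter_subset_right).trans_lt (mem_filter.1 hB).2

end Finset

theorem sStar_two_families_general (n t : ℕ) :
    IsGreatest
      {P : ℕ | ∃ F1 F2 : Finset (Finset (Fin n)),
        (∀ A ∈ F1, ∀ B ∈ F2, (A ∩ B).card ≤ t) ∧
        P = F1.card * F2.card}
      (2 ^ n * ∑ i ∈ Finset.range (t + 1), n.choose i) := by
  constructor
  · refine ⟨(univ : Finset (Fin n)).powerset, {B ∈ (univ : Finset (Fin n)).powerset | #B < t + 1},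
      fun A hA B hB ↦ Nat.le_of_lt_succ
        (crossIntersectionsLT_powerset_filter_card_lt univ (t + 1) A hA B hB), ?_⟩
    rw [card_powerset, card_filter_card_lt_powerset, card_univ, Fintype.card_fin]
  · rintro _ ⟨F1, F2, hcross, rfl⟩
    simpa using card_mul_card_le_of_crossIntersectionsLT (S := (univ : Finset (Fin n)))
      (by simp) (by simp) fun A hA B hB ↦ Nat.lt_succ_of_le (hcross A hA B hB)

/-- For `n ≥ 1` and `t ≥ 0`, `s*(n,2,t) = 2^n · Σ_{i=0}^{t} C(n,i)`:
the product `|𝓕_1|·|𝓕_2|` of two families of subsets of `[n]` all of whose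
cross-intersections have size at most `t` is at most `2^n · Σ_{i≤t} C(n,i)`,
and this bound is attained. -/
theorem sStar_two_families (n t : ℕ) (hn : 1 ≤ n) :
    IsGreatest
      {P : ℕ | ∃ F1 F2 : Finset (Finset (Fin n)),
        (∀ A ∈ F1, ∀ B ∈ F2, (A ∩ B).card ≤ t) ∧
        P = F1.card * F2.card}
      (2 ^ n * ∑ i ∈ Finset.range (t + 1), n.choose i) :=
  sStar_two_families_general n t
end

section
/- For all integers n ≥ 1, s*(n,2,1) = (n+1)·2^n. That is: if 𝓕_1, 𝓕_2 are families of subsets of [n] with |F1 ∩ F2| ≤ 1 for all F1 ∈ 𝓕_1 and F2 ∈ 𝓕_2, then |𝓕_1|·|𝓕_2| ≤ (n+1)·2^n, and this bound is attained by some such pair of families. -/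
/-!
Count the pairs `(A, B) ∈ 𝓕₁ × 𝓕₂` by their symmetric difference `D = A ∆ B`. For fixed `D`
the pair is determined by `A`, and any two such sets satisfy `|A ∩ (A' ∆ D)| ≤ 1`. Those inside
`D` pairwise differ by at most one element in each direction, so there are at most `|D| + 1` of
them; each of the others has exactly one point outside `D`, and that point determines it, so there
are at most `n - |D|` of them. Summing `n + 1` over the `2ⁿ` choices of `D` gives the bound, which
is attained by `{∅} ∪ {singletons}` against all subsets of `[n]`.
-/

open Finset
open scoped symmDiff

variable {α : Type*} [DecidableEq α]

lemma subset_of_card_insert_sdiff_le_one {x : α} {B C : Finset α} (hxB : x ∉ B) (hxC : x ∉ C)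
    (h : #(insert x B \ C) ≤ 1) : B ⊆ C := by
  intro y hyB
  by_contra hyC
  have hxy : x = y := card_le_one.1 h x (by simp [hxC]) y (by simp [hyB, hyC])
  exact hxB (hxy ▸ hyB)

lemma eq_or_eq_insert_of_erase_eq_erase {x : α} {A B : Finset α} (hxB : x ∉ B)
    (h : A.erase x = B.erase x) : A = B ∨ A = insert x B := by
  rw [erase_eq_of_notMem hxB] at h
  by_cases hxA : x ∈ A
  · exact .inr (by rw [← h, insert_erase hxA])
  · exact .inl (by rwa [erase_eq_of_notMem hxA] at h)

theorem card_le_card_add_one_of_card_sdiff_le_one (D : Finset α) {K : Finset (Finset α)}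
    (hKD : ∀ A ∈ K, A ⊆ D) (hK : ∀ A ∈ K, ∀ B ∈ K, #(A \ B) ≤ 1) : #K ≤ #D + 1 := by
  induction D using Finset.induction_on generalizing K with
  | empty =>
    have hK₀ : K ⊆ {∅} := fun A hA => mem_singleton.2 (subset_empty.1 (hKD A hA))
    simpa using card_le_card hK₀
  | insert x D hxD ih =>
    -- Erasing `x` is injective on `K` except on the sets `B ∌ x` with `insert x B ∈ K`,
    -- and there is at most one such `B`.
    set P := K.filter fun B => x ∉ B ∧ insert x B ∈ K
    have hP : #P ≤ 1 := by
      refine card_le_one.2 fun B hB C hC => ?_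
      simp only [P, mem_filter] at hB hC
      exact (subset_of_card_insert_sdiff_le_one hB.2.1 hC.2.1 (hK _ hB.2.2 _ hC.1)).antisymm
        (subset_of_card_insert_sdiff_le_one hC.2.1 hB.2.1 (hK _ hC.2.2 _ hB.1))
    have hinj : Set.InjOn (fun A : Finset α => A.erase x) ↑(K \ P) := by
      intro A hA B hB hAB
      simp only [coe_sdiff, Set.mem_sdiff, mem_coe, P, mem_filter, not_and] at hA hB
      by_cases hxA : x ∈ A <;> by_cases hxB : x ∈ B
      · exact erase_injOn' x hxA hxB hAB
      · refine (eq_or_eq_insert_of_erase_eq_erase hxB hAB).resolve_right fun h => ?_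
        exact hB.2 hB.1 hxB (h ▸ hA.1)
      · refine ((eq_or_eq_insert_of_erase_eq_erase hxA hAB.symm).resolve_right fun h => ?_).symm
        exact hA.2 hA.1 hxA (h ▸ hB.1)
      · exact (eq_or_eq_insert_of_erase_eq_erase hxB hAB).resolve_right
          fun h => hxA (h ▸ mem_insert_self x B)
    have himage : #((K \ P).image fun A => A.erase x) ≤ #D + 1 := by
      refine ih (fun A hA => ?_) fun A hA B hB => ?_
      · obtain ⟨A, hAK, rfl⟩ := mem_image.1 hA
        exact subset_insert_iff.1 (hKD A (mem_sdiff.1 hAK).1)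
      · obtain ⟨A, hAK, rfl⟩ := mem_image.1 hA
        obtain ⟨B, hBK, rfl⟩ := mem_image.1 hB
        refine (card_le_card fun y => ?_).trans (hK A (mem_sdiff.1 hAK).1 B (mem_sdiff.1 hBK).1)
        simp only [mem_sdiff, mem_erase]
        tauto
    calc #K ≤ #(K \ P) + #P := card_le_card_sdiff_add_card
      _ ≤ #D + 1 + 1 := by rw [← card_image_of_injOn hinj]; omega
      _ = #(insert x D) + 1 := by rw [card_insert_of_notMem hxD]

lemma sdiff_subset_inter_symmDiff {A B D : Finset α} (hAD : A ⊆ D) : A \ B ⊆ A ∩ (B ∆ D) := by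
  intro y hy
  simp only [mem_sdiff, mem_inter, mem_symmDiff] at hy ⊢
  exact ⟨hy.1, .inr ⟨hAD hy.1, hy.2⟩⟩

lemma subset_of_sdiff_eq_sdiff {A B D : Finset α} (hAB : #(A ∩ (B ∆ D)) ≤ 1)
    (hA : (A \ D).Nonempty) (h : A \ D = B \ D) : A ⊆ B := by
  intro y hyA
  by_contra hyB
  obtain ⟨m, hm⟩ := hA
  have hmB := h ▸ hm
  simp only [mem_sdiff] at hm hmB
  have hyD : y ∈ D := by
    by_contra hyD
    exact hyB (mem_sdiff.1 (h ▸ mem_sdiff.2 ⟨hyA, hyD⟩)).1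
  have hym : y = m := card_le_one.1 hAB y (by simp [mem_symmDiff, hyA, hyB, hyD])
    m (by simp [mem_symmDiff, hm.1, hm.2, hmB.1])
  exact hm.2 (hym ▸ hyD)

section Fintype

variable [Fintype α]

lemma card_filter_not_subset_le_card_compl (D : Finset α) {G : Finset (Finset α)}
    (hG : ∀ A ∈ G, ∀ B ∈ G, #(A ∩ (B ∆ D)) ≤ 1) : #(G.filter (¬ · ⊆ D)) ≤ #Dᶜ := by
  calc #(G.filter (¬ · ⊆ D)) ≤ #(Dᶜ.powersetCard 1) := by
        refine card_le_card_of_injOn (· \ D) (fun A hA => ?_) fun A hA B hB hAB => ?_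
        · simp only [coe_filter, Set.mem_ofPred_eq] at hA
          have hle : #(A \ D) ≤ 1 := by
            refine (card_le_card fun y => ?_).trans (hG A hA.1 A hA.1)
            simp only [mem_sdiff, mem_inter, mem_symmDiff]
            tauto
          refine mem_powersetCard.2 ⟨fun y hy => mem_compl.2 (mem_sdiff.1 hy).2, ?_⟩
          exact hle.antisymm (card_pos.2 (sdiff_nonempty.2 hA.2))
        · simp only [coe_filter, Set.mem_ofPred_eq] at hA hB
          exact (subset_of_sdiff_eq_sdiff (hG A hA.1 B hB.1) (sdiff_nonempty.2 hA.2) hAB).antisymm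
            (subset_of_sdiff_eq_sdiff (hG B hB.1 A hA.1) (sdiff_nonempty.2 hB.2) hAB.symm)
    _ = #Dᶜ := by rw [card_powersetCard, Nat.choose_one_right]

theorem card_le_card_add_one_of_card_inter_symmDiff_le_one (D : Finset α)
    {G : Finset (Finset α)} (hG : ∀ A ∈ G, ∀ B ∈ G, #(A ∩ (B ∆ D)) ≤ 1) :
    #G ≤ Fintype.card α + 1 := by
  have hin : #(G.filter (· ⊆ D)) ≤ #D + 1 := by
    refine card_le_card_add_one_of_card_sdiff_le_one D (fun A hA => (mem_filter.1 hA).2)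
      fun A hA B hB => ?_
    exact (card_le_card (sdiff_subset_inter_symmDiff (mem_filter.1 hA).2)).trans
      (hG A (mem_filter.1 hA).1 B (mem_filter.1 hB).1)
  calc #G = #(G.filter (· ⊆ D)) + #(G.filter (¬ · ⊆ D)) :=
        (card_filter_add_card_filter_not _).symm
    _ ≤ #D + 1 + #Dᶜ := add_le_add hin (card_filter_not_subset_le_card_compl D hG)
    _ = Fintype.card α + 1 := by rw [add_right_comm, card_add_card_compl]

theorem card_mul_card_eq_sum_card_filter_symmDiff_mem (F₁ F₂ : Finset (Finset α)) :
    #F₁ * #F₂ = ∑ D, #(F₁.filter fun A => A ∆ D ∈ F₂) := by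
  simp only [card_filter]
  rw [sum_comm, ← smul_eq_mul, ← sum_const]
  refine sum_congr rfl fun A _ => ?_
  rw [← Equiv.sum_comp ((symmDiff_right_involutive A).toPerm _)]
  simp

theorem card_mul_card_le_of_card_inter_le_one {F₁ F₂ : Finset (Finset α)}
    (h : ∀ A ∈ F₁, ∀ B ∈ F₂, #(A ∩ B) ≤ 1) :
    #F₁ * #F₂ ≤ (Fintype.card α + 1) * 2 ^ Fintype.card α := by
  rw [card_mul_card_eq_sum_card_filter_symmDiff_mem, mul_comm, ← Fintype.card_finset,
    ← card_univ, ← smul_eq_mul, ← sum_const]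
  refine sum_le_sum fun D _ => card_le_card_add_one_of_card_inter_symmDiff_le_one D ?_
  intro A hA B hB
  exact h A (mem_filter.1 hA).1 _ (mem_filter.1 hB).2

end Fintype

theorem sStar_two_families_one_general (n : ℕ) :
    IsGreatest
      {P : ℕ | ∃ F1 F2 : Finset (Finset (Fin n)),
        (∀ A ∈ F1, ∀ B ∈ F2, (A ∩ B).card ≤ 1) ∧
        P = F1.card * F2.card}
      ((n + 1) * 2 ^ n) := by
  refine ⟨⟨insert ∅ (univ.map ⟨singleton, singleton_injective⟩), univ, ?_, ?_⟩, ?_⟩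
  · intro A hA B _
    refine (card_le_card inter_subset_left).trans ?_
    rcases mem_insert.1 hA with rfl | hA
    · simp
    · obtain ⟨i, -, rfl⟩ := mem_map.1 hA
      simp
  · simp
  · rintro _ ⟨F₁, F₂, h, rfl⟩
    simpa using card_mul_card_le_of_card_inter_le_one h

/-- For `n ≥ 1`, `s*(n,2,1) = (n+1)·2^n`: the product `|𝓕_1|·|𝓕_2|`
of two families of subsets of `[n]` all of whose cross-intersections have size at
most `1` is at most `(n+1)·2^n`, and this bound is attained. -/
theorem sStar_two_families_one (n : ℕ) (hn : 1 ≤ n) :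
    IsGreatest
      {P : ℕ | ∃ F1 F2 : Finset (Finset (Fin n)),
        (∀ A ∈ F1, ∀ B ∈ F2, (A ∩ B).card ≤ 1) ∧
        P = F1.card * F2.card}
      ((n + 1) * 2 ^ n) :=
  sStar_two_families_one_general n
end

section
/- Fix an integer ℓ ≥ 2, a vector 𝐦 = (𝐦_S) of nonnegative integers indexed by unordered pairs of distinct elements of [ℓ], and a real number α with 0 ≤ α < 1/2. Let 𝓕_1,…,𝓕_ℓ be an extremal 𝐦-overlapping tuple of families of subsets of [n], and for each k let C_k = {x ∈ [n] : d_k(x) ≥ 1/2 − α}. Then for every k ∈ [ℓ] and every subset F ⊆ C_k one has d_k(F) ≥ 2^{−|F|} − 2α. -/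
open scoped Classical

noncomputable section

/-- The `𝐦`-overlapping property. -/
def Overlap {n ℓ : ℕ} (m : Fin ℓ → Fin ℓ → ℕ) (F : Fin ℓ → Finset (Finset (Fin n))) : Prop :=
  ∀ k1 k2 : Fin ℓ, k1 ≠ k2 → ∀ A ∈ F k1, ∀ B ∈ F k2, (A ∩ B).card ≤ m k1 k2

/-- An `𝐦`-overlapping tuple maximizing the product of cardinalities. -/
def Extremal {n ℓ : ℕ} (m : Fin ℓ → Fin ℓ → ℕ) (F : Fin ℓ → Finset (Finset (Fin n))) : Prop :=
  Overlap m F ∧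
    ∀ G : Fin ℓ → Finset (Finset (Fin n)), Overlap m G →
      ∏ k, (G k).card ≤ ∏ k, (F k).card

/-- The normalized degree `d_k(S) = |{F ∈ 𝓕_k : S ⊆ F}| / |𝓕_k|`. -/
def deg {n ℓ : ℕ} (F : Fin ℓ → Finset (Finset (Fin n))) (k : Fin ℓ) (S : Finset (Fin n)) : ℝ :=
  (((F k).filter (fun A => S ⊆ A)).card : ℝ) / ((F k).card : ℝ)

/-- The set `{x ∈ [n] : d_k(x) ≥ 1/2 − α}` (a probabilistic center). -/
def center {n ℓ : ℕ} (F : Fin ℓ → Finset (Finset (Fin n))) (α : ℝ) (k : Fin ℓ) :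
    Finset (Fin n) :=
  Finset.univ.filter (fun x => (1 : ℝ) / 2 - α ≤ deg F k {x})

/-- Splitting a filtered set by an extra predicate. -/
lemma filter_split {β : Type*} (s : Finset β) (q p : β → Prop)
    [DecidablePred p] [DecidablePred q] :
    (s.filter (fun a => q a ∧ p a)).card + (s.filter (fun a => q a ∧ ¬ p a)).card
      = (s.filter q).card := by
  rw [← Finset.filter_filter, ← Finset.filter_filter]
  exact Finset.card_filter_add_card_filter_not p

/-- Claim 12 of the paper. Fix `ℓ ≥ 2`, symmetric `𝐦`, and
`0 ≤ α < 1/2`. For an extremal `𝐦`-overlapping tuple `𝓕` on `[n]`, with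
`C_k = {x : d_k(x) ≥ 1/2 − α}`, every `S ⊆ C_k` satisfies `d_k(S) ≥ 2^{−|S|} − 2α`. -/
theorem inner_set_degree (ℓ : ℕ) (hℓ : 2 ≤ ℓ) (m : Fin ℓ → Fin ℓ → ℕ)
    (hsym : ∀ k1 k2, m k1 k2 = m k2 k1) (α : ℝ) (hα0 : 0 ≤ α) (hα : α < 1 / 2)
    (n : ℕ) (F : Fin ℓ → Finset (Finset (Fin n))) (hF : Extremal m F) :
    ∀ k : Fin ℓ, ∀ S : Finset (Fin n), S ⊆ center F α k →
      ((2 : ℝ) ^ S.card)⁻¹ - 2 * α ≤ deg F k S := by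
  classical
  obtain ⟨hOv, hmax⟩ := hF
  -- Step 1: all families are nonempty.
  have hne : ∀ k, 0 < (F k).card := by
    have h1 : Overlap m (fun _ => ({∅} : Finset (Finset (Fin n)))) := by
      intro k1 k2 _ A hA B hB
      simp only [Finset.mem_singleton] at hA hB
      subst hA; subst hB; simp
    have h2 := hmax _ h1
    simp only [Finset.card_singleton, Finset.prod_const_one] at h2
    intro k
    rcases Nat.eq_zero_or_pos (F k).card with h | h
    · exfalso
      have h0 : ∏ j, (F j).card = 0 := Finset.prod_eq_zero (Finset.mem_univ k) h
      omega
    · exact h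
  -- Step 2: each family is closed under erasing an element.
  have hdown : ∀ k, ∀ A ∈ F k, ∀ x : Fin n, A.erase x ∈ F k := by
    intro k A hA x
    by_contra hxmem
    set G : Fin ℓ → Finset (Finset (Fin n)) :=
      Function.update F k (insert (A.erase x) (F k)) with hGdef
    have hGk : G k = insert (A.erase x) (F k) := Function.update_self _ _ _
    have hGj : ∀ j, j ≠ k → G j = F j := fun j hj => Function.update_of_ne hj _ _
    have hmem : ∀ j, ∀ C ∈ G j, C ∈ F j ∨ (j = k ∧ C ⊆ A) := by
      intro j C hC
      by_cases hj : j = k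
      · subst hj
        rw [hGk, Finset.mem_insert] at hC
        rcases hC with h | h
        · exact Or.inr ⟨rfl, h ▸ Finset.erase_subset _ _⟩
        · exact Or.inl h
      · rw [hGj j hj] at hC; exact Or.inl hC
    have hOvG : Overlap m G := by
      intro k1 k2 h12 A1 hA1 B1 hB1
      rcases hmem k1 A1 hA1 with h1 | ⟨hk1, h1⟩
      · rcases hmem k2 B1 hB1 with h2 | ⟨hk2, h2⟩
        · exact hOv k1 k2 h12 A1 h1 B1 h2
        · subst hk2
          calc (A1 ∩ B1).card ≤ (A1 ∩ A).card :=
                Finset.card_le_card (Finset.inter_subset_inter (subset_refl _) h2)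
            _ ≤ m k1 k2 := hOv k1 k2 h12 A1 h1 A hA
      · subst hk1
        rcases hmem k2 B1 hB1 with h2 | ⟨hk2, h2⟩
        · calc (A1 ∩ B1).card ≤ (A ∩ B1).card :=
                Finset.card_le_card (Finset.inter_subset_inter h1 (subset_refl _))
            _ ≤ m k1 k2 := hOv k1 k2 h12 A hA B1 h2
        · exact absurd hk2.symm h12
    have hle := hmax G hOvG
    have hprodG : ∏ j, (G j).card
        = ((F k).card + 1) * ∏ j ∈ Finset.univ.erase k, (F j).card := by
      rw [← Finset.mul_prod_erase Finset.univ _ (Finset.mem_univ k)]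
      congr 1
      · rw [hGk, Finset.card_insert_of_notMem hxmem]
      · exact Finset.prod_congr rfl (fun j hj => by rw [hGj j (Finset.mem_erase.1 hj).1])
    have hprodF : ∏ j, (F j).card
        = (F k).card * ∏ j ∈ Finset.univ.erase k, (F j).card :=
      (Finset.mul_prod_erase Finset.univ _ (Finset.mem_univ k)).symm
    rw [hprodG, hprodF] at hle
    have hPpos : 0 < ∏ j ∈ Finset.univ.erase k, (F j).card :=
      Finset.prod_pos (fun j _ => hne j)
    have : (F k).card + 1 ≤ (F k).card := Nat.le_of_mul_le_mul_right hle hPpos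
    omega
  -- Step 3: key step inequality.
  have key : ∀ (k : Fin ℓ) (S : Finset (Fin n)) (x : Fin n),
      (1 : ℝ) / 2 - α ≤ deg F k {x} →
      deg F k S / 2 - α ≤ deg F k (insert x S) := by
    intro k S x hdx
    have hNpos : (0 : ℝ) < ((F k).card : ℝ) := by exact_mod_cast hne k
    have hNne : ((F k).card : ℝ) ≠ 0 := ne_of_gt hNpos
    have e1filter : (F k).filter (fun A => insert x S ⊆ A)
        = (F k).filter (fun A => S ⊆ A ∧ x ∈ A) := by
      ext A
      simp only [Finset.mem_filter, Finset.insert_subset_iff]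
      tauto
    have e2filter : (F k).filter (fun A => {x} ⊆ A)
        = (F k).filter (fun A => x ∈ A) := by
      ext A
      simp [Finset.singleton_subset_iff]
    simp only [deg] at hdx ⊢
    rw [e2filter] at hdx
    rw [e1filter]
    -- notation for the various counts
    have i1 : (((F k).filter (fun A => S ⊆ A ∧ x ∈ A)).card : ℝ)
        + (((F k).filter (fun A => S ⊆ A ∧ ¬ x ∈ A)).card : ℝ)
        = (((F k).filter (fun A => S ⊆ A)).card : ℝ) := by
      exact_mod_cast filter_split (F k) (fun A => S ⊆ A) (fun A => x ∈ A)
    have i2 : (((F k).filter (fun A => ¬ S ⊆ A ∧ x ∈ A)).card : ℝ)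
        + (((F k).filter (fun A => ¬ S ⊆ A ∧ ¬ x ∈ A)).card : ℝ)
        = (((F k).filter (fun A => ¬ S ⊆ A)).card : ℝ) := by
      exact_mod_cast filter_split (F k) (fun A => ¬ S ⊆ A) (fun A => x ∈ A)
    have i3 : (((F k).filter (fun A => S ⊆ A)).card : ℝ)
        + (((F k).filter (fun A => ¬ S ⊆ A)).card : ℝ) = ((F k).card : ℝ) := by
      exact_mod_cast Finset.card_filter_add_card_filter_not
        (s := F k) (fun A => S ⊆ A)
    have i4 : (((F k).filter (fun A => S ⊆ A ∧ x ∈ A)).card : ℝ)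
        + (((F k).filter (fun A => ¬ S ⊆ A ∧ x ∈ A)).card : ℝ)
        = (((F k).filter (fun A => x ∈ A)).card : ℝ) := by
      have h1 : (F k).filter (fun A => S ⊆ A ∧ x ∈ A)
          = (F k).filter (fun A => x ∈ A ∧ S ⊆ A) := by
        ext y; simp only [Finset.mem_filter]; tauto
      have h2 : (F k).filter (fun A => ¬ S ⊆ A ∧ x ∈ A)
          = (F k).filter (fun A => x ∈ A ∧ ¬ S ⊆ A) := by
        ext y; simp only [Finset.mem_filter]; tauto
      rw [h1, h2]
      exact_mod_cast filter_split (F k) (fun A => x ∈ A) (fun A => S ⊆ A)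
    -- the erase injection
    have hinj : (((F k).filter (fun A => ¬ S ⊆ A ∧ x ∈ A)).card : ℝ)
        ≤ (((F k).filter (fun A => ¬ S ⊆ A ∧ ¬ x ∈ A)).card : ℝ) := by
      have : ((F k).filter (fun A => ¬ S ⊆ A ∧ x ∈ A)).card
          ≤ ((F k).filter (fun A => ¬ S ⊆ A ∧ ¬ x ∈ A)).card := by
        apply Finset.card_le_card_of_injOn (fun A => A.erase x)
        · intro A hA
          rw [Finset.mem_coe, Finset.mem_filter] at hA ⊢
          obtain ⟨hAF, hnS, hxA⟩ := hA
          refine ⟨hdown k A hAF x, ?_, ?_⟩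
          · intro hcon; exact hnS (hcon.trans (Finset.erase_subset _ _))
          · exact Finset.notMem_erase _ _
        · intro A1 h1 A2 h2 he
          simp only [Finset.coe_filter, Set.mem_setOf_eq] at h1 h2
          have e1' := Finset.insert_erase h1.2.2
          have e2' := Finset.insert_erase h2.2.2
          rw [← e1', ← e2']
          simp only at he
          rw [he]
      exact_mod_cast this
    have hp : ((1 : ℝ) / 2 - α) * ((F k).card : ℝ)
        ≤ (((F k).filter (fun A => x ∈ A)).card : ℝ) := (le_div_iff₀ hNpos).mp hdx
    -- the core numerical inequality
    have goal' : (((F k).filter (fun A => S ⊆ A)).card : ℝ) / 2 - α * ((F k).card : ℝ)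
        ≤ (((F k).filter (fun A => S ⊆ A ∧ x ∈ A)).card : ℝ) := by
      linarith
    calc (((F k).filter (fun A => S ⊆ A)).card : ℝ) / ((F k).card : ℝ) / 2 - α
        = ((((F k).filter (fun A => S ⊆ A)).card : ℝ) / 2 - α * ((F k).card : ℝ))
            / ((F k).card : ℝ) := by
          field_simp
      _ ≤ (((F k).filter (fun A => S ⊆ A ∧ x ∈ A)).card : ℝ) / ((F k).card : ℝ) := by
          gcongr
  -- Step 4: induction on S.
  intro k S
  induction S using Finset.induction_on with
  | empty =>
    intro _
    have hd : deg F k ∅ = 1 := by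
      simp only [deg]
      rw [Finset.filter_true_of_mem (fun A _ => Finset.empty_subset A)]
      exact div_self (by exact_mod_cast (hne k).ne')
    rw [hd]
    simp only [Finset.card_empty, pow_zero, inv_one]
    linarith
  | @insert x S hxS ih =>
    intro hsub
    have hxc : x ∈ center F α k := hsub (Finset.mem_insert_self _ _)
    have hSc : S ⊆ center F α k := fun y hy => hsub (Finset.mem_insert_of_mem hy)
    have hdx : (1 : ℝ) / 2 - α ≤ deg F k {x} := by
      rw [center, Finset.mem_filter] at hxc
      exact hxc.2
    have h1 := key k S x hdx
    have h2 := ih hSc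
    rw [Finset.card_insert_of_notMem hxS]
    have hpow : ((2 : ℝ) ^ (S.card + 1))⁻¹ = ((2 : ℝ) ^ S.card)⁻¹ / 2 := by
      rw [pow_succ, mul_inv]
      ring
    rw [hpow]
    linarith

end
end

section
/- Fix an integer ℓ ≥ 2 and a vector 𝐦 = (𝐦_S) of nonnegative integers indexed by unordered pairs of distinct elements of [ℓ]. There exists a constant C_D > 0 such that for every integer n ≥ 1, every extremal 𝐦-overlapping tuple 𝓕_1,…,𝓕_ℓ of families of subsets of [n], every subset K ⊆ [ℓ], and every choice of sets F_k ∈ 𝓕_k for k ∈ K, one has Π_{k ∈ K} d_k(F_k) ≤ C_D · n^{−Σ |F_k ∩ F_{k'}|}, where the sum in the exponent is over all unordered pairs {k,k'} of distinct elements of K. -/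
open scoped Classical

noncomputable section

namespace MultDeg

variable {ι : Type*} [DecidableEq ι]

lemma Sins (a b : ι → ℕ) {x : ι} {s : Finset ι} (hx : x ∉ s) :
    (∑ j ∈ insert x s, b j * ∏ k ∈ (insert x s).erase j, a k)
      = b x * (∏ k ∈ s, a k) + a x * ∑ j ∈ s, b j * ∏ k ∈ s.erase j, a k := by
  rw [Finset.sum_insert hx, Finset.erase_insert hx]
  congr 1
  rw [Finset.mul_sum]
  apply Finset.sum_congr rfl
  intro j hj
  have hjx : j ≠ x := by rintro rfl; exact hx hj
  rw [Finset.erase_insert_of_ne hjx.symm,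
    Finset.prod_insert (fun hc => hx (Finset.mem_of_mem_erase hc))]
  ring

lemma Pins (a b : ι → ℕ) {x : ι} {s : Finset ι} (hx : x ∉ s) :
    (∑ q ∈ (insert x s).offDiag,
        b q.1 * b q.2 * ∏ k ∈ ((insert x s).erase q.1).erase q.2, a k)
      = a x * (∑ q ∈ s.offDiag, b q.1 * b q.2 * ∏ k ∈ (s.erase q.1).erase q.2, a k)
        + 2 * (b x * ∑ j ∈ s, b j * ∏ k ∈ s.erase j, a k) := by
  rw [Finset.offDiag_insert hx]
  rw [Finset.sum_union, Finset.sum_union]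
  · have h1 : (∑ q ∈ s.offDiag,
          b q.1 * b q.2 * ∏ k ∈ ((insert x s).erase q.1).erase q.2, a k)
        = a x * ∑ q ∈ s.offDiag, b q.1 * b q.2 * ∏ k ∈ (s.erase q.1).erase q.2, a k := by
      rw [Finset.mul_sum]
      apply Finset.sum_congr rfl
      intro q hq
      obtain ⟨hq1, hq2, -⟩ := Finset.mem_offDiag.1 hq
      have hq1x : q.1 ≠ x := by rintro rfl; exact hx hq1
      have hq2x : q.2 ≠ x := by rintro rfl; exact hx hq2
      rw [Finset.erase_insert_of_ne hq1x.symm, Finset.erase_insert_of_ne hq2x.symm,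
        Finset.prod_insert (fun hc => hx (Finset.mem_of_mem_erase (Finset.mem_of_mem_erase hc)))]
      ring
    have h2 : (∑ q ∈ ({x} : Finset ι) ×ˢ s,
          b q.1 * b q.2 * ∏ k ∈ ((insert x s).erase q.1).erase q.2, a k)
        = b x * ∑ j ∈ s, b j * ∏ k ∈ s.erase j, a k := by
      rw [Finset.singleton_product, Finset.sum_map, Finset.mul_sum]
      apply Finset.sum_congr rfl
      intro i hi
      simp only [Function.Embedding.coeFn_mk]
      rw [Finset.erase_insert hx]
      ring
    have h3 : (∑ q ∈ s ×ˢ ({x} : Finset ι),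
          b q.1 * b q.2 * ∏ k ∈ ((insert x s).erase q.1).erase q.2, a k)
        = b x * ∑ j ∈ s, b j * ∏ k ∈ s.erase j, a k := by
      rw [Finset.product_singleton, Finset.sum_map, Finset.mul_sum]
      apply Finset.sum_congr rfl
      intro i hi
      simp only [Function.Embedding.coeFn_mk]
      have hix : i ≠ x := by rintro rfl; exact hx hi
      rw [Finset.erase_insert_of_ne hix.symm,
        Finset.erase_insert (fun hc => hx (Finset.mem_of_mem_erase hc))]
      ring
    rw [h1, h2, h3]; ring
  · refine Finset.disjoint_left.2 ?_
    rintro ⟨q1, q2⟩ hq hq'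
    obtain ⟨hq1, -, -⟩ := Finset.mem_offDiag.1 hq
    obtain ⟨h1', -⟩ := Finset.mem_product.1 hq'
    simp only [Finset.mem_singleton] at h1'
    exact hx (h1' ▸ hq1)
  · refine Finset.disjoint_left.2 ?_
    rintro ⟨q1, q2⟩ hq hq'
    obtain ⟨-, h2'⟩ := Finset.mem_product.1 hq'
    simp only [Finset.mem_singleton] at h2'
    rcases Finset.mem_union.1 hq with hq | hq
    · obtain ⟨-, hq2, -⟩ := Finset.mem_offDiag.1 hq
      exact hx (h2' ▸ hq2)
    · obtain ⟨-, h2''⟩ := Finset.mem_product.1 hq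
      exact hx (h2' ▸ h2'')

/-- Singleton-sum bounded by product plus pair sum. -/
lemma slem (a b : ι → ℕ) :
    ∀ s : Finset ι, (∀ k ∈ s, b k ≤ a k) →
      (∑ j ∈ s, b j * ∏ k ∈ s.erase j, a k) ≤
        (∏ k ∈ s, a k)
        + ∑ q ∈ s.offDiag, b q.1 * b q.2 * ∏ k ∈ (s.erase q.1).erase q.2, a k := by
  intro s
  induction s using Finset.induction_on with
  | empty => simp
  | @insert x s hx ih =>
    intro hba
    have hbx : b x ≤ a x := hba x (Finset.mem_insert_self x s)
    have hba' : ∀ k ∈ s, b k ≤ a k := fun k hk => hba k (Finset.mem_insert_of_mem hk)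
    have IH := ih hba'
    set A := ∏ k ∈ s, a k with hA
    set S := ∑ j ∈ s, b j * ∏ k ∈ s.erase j, a k with hS
    set P := ∑ q ∈ s.offDiag, b q.1 * b q.2 * ∏ k ∈ (s.erase q.1).erase q.2, a k with hP
    rw [Sins a b hx, Finset.prod_insert hx, Pins a b hx, ← hA, ← hS, ← hP]
    rcases le_total S A with h | h
    · obtain ⟨c, hc⟩ := Nat.exists_eq_add_of_le h
      nlinarith [Nat.mul_le_mul_right c hbx]
    · obtain ⟨d, hd⟩ := Nat.exists_eq_add_of_le h
      have hdP : d ≤ P := by omega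
      nlinarith [Nat.mul_le_mul_left (a x) hdP]

/-- Core expansion bound. -/
lemma cl (a b : ι → ℕ) :
    ∀ s : Finset ι, (∀ k ∈ s, b k ≤ a k) →
      (∏ k ∈ s, (a k + b k)) ≤
        (∏ k ∈ s, a k)
        + (∑ j ∈ s, b j * ∏ k ∈ s.erase j, a k)
        + 2 ^ s.card *
            ∑ q ∈ s.offDiag, b q.1 * b q.2 * ∏ k ∈ (s.erase q.1).erase q.2, a k := by
  intro s
  induction s using Finset.induction_on with
  | empty => simp
  | @insert x s hx ih =>
    intro hba
    have hbx : b x ≤ a x := hba x (Finset.mem_insert_self x s)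
    have hba' : ∀ k ∈ s, b k ≤ a k := fun k hk => hba k (Finset.mem_insert_of_mem hk)
    have IH := ih hba'
    set A := ∏ k ∈ s, a k with hA
    set S := ∑ j ∈ s, b j * ∏ k ∈ s.erase j, a k with hS
    set P := ∑ q ∈ s.offDiag, b q.1 * b q.2 * ∏ k ∈ (s.erase q.1).erase q.2, a k with hP
    rw [Sins a b hx, Finset.prod_insert hx, Finset.prod_insert hx, Pins a b hx,
      Finset.card_insert_of_notMem hx, ← hA, ← hS, ← hP]
    have key : (a x + b x) * ∏ k ∈ s, (a k + b k) ≤ (a x + b x) * (A + S + 2 ^ s.card * P) :=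
      Nat.mul_le_mul_left _ IH
    refine le_trans key ?_
    have h2c : 1 ≤ 2 ^ s.card := Nat.one_le_two_pow
    rw [pow_succ]
    have e1 : b x * (2 ^ s.card * P) ≤ a x * (2 ^ s.card * P) :=
      Nat.mul_le_mul_right _ hbx
    have e2 : b x * S * 1 ≤ b x * S * 2 ^ s.card :=
      Nat.mul_le_mul_left _ h2c
    nlinarith [e1, e2]

/-- The main product expansion inequality. -/
lemma prod_add_le (a b : ι → ℕ) (s : Finset ι) (hba : ∀ k ∈ s, b k ≤ a k) :
    (∏ k ∈ s, (a k + b k)) ≤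
      2 * (∏ k ∈ s, a k)
      + (2 ^ s.card + 1) *
          ∑ q ∈ s.offDiag, b q.1 * b q.2 * ∏ k ∈ (s.erase q.1).erase q.2, a k := by
  have h1 := cl a b s hba
  have h2 := slem a b s hba
  nlinarith



/-- The constant in the upper bound recursion. -/
def DD (ℓ : ℕ) : ℕ := (2 ^ ℓ + 1) * (ℓ * ℓ)

/-- Upper bound for down-closed overlapping systems:
`∏ |F_k| ≤ (1+D)^E · 2^{|U|} · (n+1)^E` where `2E` is the total budget. -/
lemma upper_dc (n ℓ : ℕ) :
    ∀ E : ℕ, ∀ μ : Fin ℓ → Fin ℓ → ℕ, (∀ i j, μ i j = μ j i) →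
      (∑ q ∈ (Finset.univ : Finset (Fin ℓ)).offDiag, μ q.1 q.2) = 2 * E →
      ∀ U : Finset (Fin n), ∀ F : Fin ℓ → Finset (Finset (Fin n)),
        (∀ k, F k ⊆ U.powerset) → (∀ k, ∀ A ∈ F k, ∀ B, B ⊆ A → B ∈ F k) →
        Overlap μ F →
        (∏ k, (F k).card) ≤ (1 + DD ℓ) ^ E * 2 ^ U.card * (n + 1) ^ E := by
  intro E
  induction E using Nat.strong_induction_on with
  | _ E ihE =>
  intro μ hsym hW
  set PB : ℕ := if E = 0 then 0 else (1 + DD ℓ) ^ (E - 1) * (n + 1) ^ (E - 1) with hPB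
  suffices inner : ∀ U : Finset (Fin n), ∀ F : Fin ℓ → Finset (Finset (Fin n)),
      (∀ k, F k ⊆ U.powerset) → (∀ k, ∀ A ∈ F k, ∀ B, B ⊆ A → B ∈ F k) →
      Overlap μ F →
      (∏ k, (F k).card) ≤ 2 ^ U.card * (1 + U.card * (DD ℓ * PB)) by
    intro U F hsub hdc hov
    refine le_trans (inner U F hsub hdc hov) ?_
    rcases Nat.eq_zero_or_pos E with hE0 | hEpos
    · subst hE0
      simp only [if_pos rfl] at hPB
      simp [hPB]
    · obtain ⟨e, rfl⟩ := Nat.exists_eq_succ_of_ne_zero (Nat.pos_iff_ne_zero.1 hEpos)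
      have hPB' : PB = (1 + DD ℓ) ^ e * (n + 1) ^ e := by
        rw [hPB, if_neg (Nat.succ_ne_zero e)]
        simp
      have hone : 1 ≤ (1 + DD ℓ) ^ e * (n + 1) ^ e :=
        Nat.one_le_iff_ne_zero.2 (by positivity)
      have hu : U.card ≤ n := by
        have := Finset.card_le_card (Finset.subset_univ U)
        simpa using this
      calc 2 ^ U.card * (1 + U.card * (DD ℓ * PB))
          ≤ 2 ^ U.card * ((1 + DD ℓ) ^ e * (n + 1) ^ e * ((1 + DD ℓ) * (n + 1))) := by
            apply Nat.mul_le_mul_left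
            rw [hPB']
            have h2 : U.card * (DD ℓ * ((1 + DD ℓ) ^ e * (n + 1) ^ e))
                ≤ n * (DD ℓ * ((1 + DD ℓ) ^ e * (n + 1) ^ e)) :=
              Nat.mul_le_mul_right _ hu
            nlinarith [hone, h2]
        _ = (1 + DD ℓ) ^ (e + 1) * 2 ^ U.card * (n + 1) ^ (e + 1) := by ring
  intro U
  induction U using Finset.strongInduction with
  | _ U ihU =>
  intro F hsub hdc hov
  rcases U.eq_empty_or_nonempty with rfl | ⟨x, hxU⟩
  · have h1 : ∀ k, (F k).card ≤ 1 := by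
      intro k
      have := Finset.card_le_card (hsub k)
      simpa using this
    calc (∏ k, (F k).card) ≤ ∏ _k : Fin ℓ, 1 :=
          Finset.prod_le_prod' fun k _ => h1 k
      _ = 1 := Finset.prod_const_one
      _ ≤ _ := Nat.one_le_iff_ne_zero.2 (by positivity)
  · set U' := U.erase x with hU'
    have hU'ss : U' ⊂ U := Finset.erase_ssubset hxU
    have hUcard : U'.card + 1 = U.card := by
      rw [hU', Finset.card_erase_of_mem hxU]
      exact Nat.succ_pred_eq_of_pos (Finset.card_pos.2 ⟨x, hxU⟩)
    set a : Fin ℓ → ℕ := fun k => ((F k).filter (fun A => x ∉ A)).card with ha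
    set b : Fin ℓ → ℕ := fun k => ((F k).filter (fun A => x ∈ A)).card with hb
    set F0 : Fin ℓ → Finset (Finset (Fin n)) := fun k => (F k).filter (fun A => x ∉ A) with hF0
    set L : Fin ℓ → Finset (Finset (Fin n)) :=
      fun k => ((F k).filter (fun A => x ∈ A)).image (fun A => A.erase x) with hL
    have hLcard : ∀ k, (L k).card = b k := by
      intro k
      rw [hL, hb]
      apply Finset.card_image_of_injOn
      intro A hA B hB hAB
      simp only [Finset.coe_filter, Set.mem_setOf_eq] at hA hB
      have hAB' : A.erase x = B.erase x := hAB
      have h' : insert x (A.erase x) = insert x (B.erase x) := by rw [hAB']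
      rwa [Finset.insert_erase hA.2, Finset.insert_erase hB.2] at h'
    have hLF0 : ∀ k, L k ⊆ F0 k := by
      intro k B hB
      rw [hL] at hB
      obtain ⟨A, hA, rfl⟩ := Finset.mem_image.1 hB
      rw [Finset.mem_filter] at hA
      rw [hF0, Finset.mem_filter]
      exact ⟨hdc k A hA.1 _ (Finset.erase_subset x A), Finset.notMem_erase x A⟩
    have hba : ∀ k, b k ≤ a k := by
      intro k
      rw [← hLcard k]
      exact Finset.card_le_card (hLF0 k)
    have hcardsplit : ∀ k, (F k).card = a k + b k := by
      intro k
      have h := Finset.card_filter_add_card_filter_not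
        (s := F k) (p := fun A => x ∈ A)
      show (F k).card = ((F k).filter (fun A => x ∉ A)).card
        + ((F k).filter (fun A => x ∈ A)).card
      omega
    have hF0sub : ∀ k, F0 k ⊆ U'.powerset := by
      intro k A hA
      rw [hF0, Finset.mem_filter] at hA
      rw [Finset.mem_powerset]
      intro y hy
      rw [hU', Finset.mem_erase]
      exact ⟨fun hyx => hA.2 (hyx ▸ hy), (Finset.mem_powerset.1 (hsub k hA.1)) hy⟩
    have hF0dc : ∀ k, ∀ A ∈ F0 k, ∀ B, B ⊆ A → B ∈ F0 k := by
      intro k A hA B hBA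
      rw [hF0, Finset.mem_filter] at hA ⊢
      exact ⟨hdc k A hA.1 B hBA, fun hxB => hA.2 (hBA hxB)⟩
    have hF0ov : Overlap μ F0 := by
      intro k1 k2 hne A hA B hB
      exact hov k1 k2 hne A (Finset.mem_filter.1 hA).1 B (Finset.mem_filter.1 hB).1
    have hProdA : (∏ k, a k) ≤ 2 ^ U'.card * (1 + U'.card * (DD ℓ * PB)) := by
      have := ihU U' hU'ss F0 hF0sub hF0dc hF0ov
      simpa [hF0, ha] using this
    -- pair terms
    have hpair : ∀ q ∈ (Finset.univ : Finset (Fin ℓ)).offDiag,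
        b q.1 * b q.2 * (∏ k ∈ (Finset.univ.erase q.1).erase q.2, a k)
          ≤ PB * 2 ^ U'.card := by
      rintro ⟨i, j⟩ hq
      obtain ⟨-, -, hij⟩ := Finset.mem_offDiag.1 hq
      rcases Nat.eq_zero_or_pos (μ i j) with hμ0 | hμpos
      · have hzero : b i * b j = 0 := by
          by_contra hc
          have hbi : 0 < b i := Nat.pos_of_ne_zero (fun h => hc (by rw [h, zero_mul]))
          have hbj : 0 < b j := Nat.pos_of_ne_zero (fun h => hc (by rw [h, mul_zero]))
          rw [hb] at hbi hbj
          obtain ⟨A, hA⟩ := Finset.card_pos.1 hbi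
          obtain ⟨B, hB⟩ := Finset.card_pos.1 hbj
          rw [Finset.mem_filter] at hA hB
          have hle := hov i j hij A hA.1 B hB.1
          have hxAB : x ∈ A ∩ B := Finset.mem_inter.2 ⟨hA.2, hB.2⟩
          have := Finset.card_pos.2 ⟨x, hxAB⟩
          omega
        rw [hzero, zero_mul]
        exact Nat.zero_le _
      · have hEne : E ≠ 0 := by
          intro hE0
          rw [hE0, mul_zero] at hW
          have := Finset.sum_eq_zero_iff.1 hW ⟨i, j⟩ hq
          simp only at this
          omega
        have hPB' : PB = (1 + DD ℓ) ^ (E - 1) * (n + 1) ^ (E - 1) := by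
          rw [hPB, if_neg hEne]
        have hμji : 0 < μ j i := by rw [← hsym i j]; exact hμpos
        set μ' : Fin ℓ → Fin ℓ → ℕ := fun p q =>
          if (p = i ∧ q = j) ∨ (p = j ∧ q = i) then μ p q - 1 else μ p q with hμ'
        have hsym' : ∀ p q, μ' p q = μ' q p := by
          intro p q
          simp only [hμ']
          by_cases h : (p = i ∧ q = j) ∨ (p = j ∧ q = i)
          · rw [if_pos h, if_pos (by tauto), hsym]
          · rw [if_neg h, if_neg (by tauto), hsym]
        have hqij : ((i, j) : Fin ℓ × Fin ℓ) ∈ (Finset.univ : Finset (Fin ℓ)).offDiag := by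
          rw [Finset.mem_offDiag]
          exact ⟨Finset.mem_univ _, Finset.mem_univ _, hij⟩
        have hqji : ((j, i) : Fin ℓ × Fin ℓ) ∈ (Finset.univ : Finset (Fin ℓ)).offDiag := by
          rw [Finset.mem_offDiag]
          exact ⟨Finset.mem_univ _, Finset.mem_univ _, Ne.symm hij⟩
        have hne' : ((j, i) : Fin ℓ × Fin ℓ) ≠ (i, j) := by
          intro h
          exact hij (congrArg Prod.snd h)
        have decomp : ∀ g : Fin ℓ × Fin ℓ → ℕ,
            (∑ q ∈ (Finset.univ : Finset (Fin ℓ)).offDiag, g q)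
              = g (i, j) + (g (j, i) +
                  ∑ q ∈ (((Finset.univ : Finset (Fin ℓ)).offDiag).erase (i, j)).erase (j, i),
                    g q) := by
          intro g
          rw [Finset.add_sum_erase _ g (Finset.mem_erase.2 ⟨hne', hqji⟩),
            Finset.add_sum_erase _ g hqij]
        have hW' : (∑ q ∈ (Finset.univ : Finset (Fin ℓ)).offDiag, μ' q.1 q.2) = 2 * (E - 1) := by
          have h1 := decomp (fun q => μ' q.1 q.2)
          have h2 := decomp (fun q => μ q.1 q.2)
          have hrest : (∑ q ∈ (((Finset.univ : Finset (Fin ℓ)).offDiag).erase (i, j)).erase (j, i),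
                μ' q.1 q.2)
              = ∑ q ∈ (((Finset.univ : Finset (Fin ℓ)).offDiag).erase (i, j)).erase (j, i),
                μ q.1 q.2 := by
            apply Finset.sum_congr rfl
            intro q hq'
            have hq1 : q ≠ (j, i) := Finset.ne_of_mem_erase hq'
            have hq2 : q ≠ (i, j) := Finset.ne_of_mem_erase (Finset.mem_of_mem_erase hq')
            simp only [hμ']
            rw [if_neg]
            rintro (⟨e1, e2⟩ | ⟨e1, e2⟩)
            · exact hq2 (Prod.ext e1 e2)
            · exact hq1 (Prod.ext e1 e2)
          have hij' : μ' i j = μ i j - 1 := by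
            show (if (i = i ∧ j = j) ∨ (i = j ∧ j = i) then μ i j - 1 else μ i j) = μ i j - 1
            rw [if_pos (Or.inl ⟨rfl, rfl⟩)]
          have hji' : μ' j i = μ j i - 1 := by
            show (if (j = i ∧ i = j) ∨ (j = j ∧ i = i) then μ j i - 1 else μ j i) = μ j i - 1
            rw [if_pos (Or.inr ⟨rfl, rfl⟩)]
          simp only at h1 h2
          rw [hrest, hij', hji'] at h1
          rw [hW] at h2
          omega
        set Fp : Fin ℓ → Finset (Finset (Fin n)) :=
          fun k => if k = i then L i else if k = j then L j else F0 k with hFp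
        have hFpF0 : ∀ k, Fp k ⊆ F0 k := by
          intro k
          simp only [hFp]
          split_ifs with h1 h2
          · exact h1 ▸ hLF0 i
          · exact h2 ▸ hLF0 j
          · exact Finset.Subset.refl _
        have hFpsub : ∀ k, Fp k ⊆ U'.powerset := fun k =>
          (hFpF0 k).trans (hF0sub k)
        have hLdc : ∀ k, ∀ A ∈ L k, ∀ B, B ⊆ A → B ∈ L k := by
          intro k A hA B hBA
          rw [hL] at hA ⊢
          obtain ⟨A₀, hA₀, rfl⟩ := Finset.mem_image.1 hA
          rw [Finset.mem_filter] at hA₀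
          refine Finset.mem_image.2 ⟨insert x B, ?_, ?_⟩
          · rw [Finset.mem_filter]
            constructor
            · apply hdc k A₀ hA₀.1
              intro y hy
              rcases Finset.mem_insert.1 hy with rfl | hyB
              · exact hA₀.2
              · exact Finset.mem_of_mem_erase (hBA hyB)
            · exact Finset.mem_insert_self x B
          · apply Finset.erase_insert
            intro hxB
            exact Finset.notMem_erase x A₀ (hBA hxB)
        have hFpdc : ∀ k, ∀ A ∈ Fp k, ∀ B, B ⊆ A → B ∈ Fp k := by
          intro k
          simp only [hFp]
          split_ifs with h1 h2
          · exact hLdc i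
          · exact hLdc j
          · exact hF0dc k
        have hFpmemL : ∀ k A, A ∈ Fp k → (k = i ∨ k = j) → A ∈ L k := by
          intro k A hA hk
          simp only [hFp] at hA
          by_cases h1 : k = i
          · rw [if_pos h1] at hA
            rw [h1]; exact hA
          · have h2 : k = j := by tauto
            rw [if_neg h1, if_pos h2] at hA
            rw [h2]; exact hA
        have hFpov : Overlap μ' Fp := by
          intro k1 k2 hne A hA B hB
          by_cases hk : (k1 = i ∧ k2 = j) ∨ (k1 = j ∧ k2 = i)
          · have hAL : A ∈ L k1 := hFpmemL k1 A hA (by tauto)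
            have hBL : B ∈ L k2 := hFpmemL k2 B hB (by tauto)
            rw [hL] at hAL hBL
            obtain ⟨A₀, hA₀, rfl⟩ := Finset.mem_image.1 hAL
            obtain ⟨B₀, hB₀, rfl⟩ := Finset.mem_image.1 hBL
            rw [Finset.mem_filter] at hA₀ hB₀
            have hABint : A₀.erase x ∩ B₀.erase x = (A₀ ∩ B₀).erase x := by
              ext y
              simp only [Finset.mem_inter, Finset.mem_erase]
              tauto
            have hxint : x ∈ A₀ ∩ B₀ := Finset.mem_inter.2 ⟨hA₀.2, hB₀.2⟩
            have hcard : (A₀.erase x ∩ B₀.erase x).card = (A₀ ∩ B₀).card - 1 := by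
              rw [hABint, Finset.card_erase_of_mem hxint]
            have hbound := hov k1 k2 hne A₀ hA₀.1 B₀ hB₀.1
            have hμ'eq : μ' k1 k2 = μ k1 k2 - 1 := by
              simp only [hμ']
              rw [if_pos hk]
            omega
          · have hA' : A ∈ F0 k1 := hFpF0 k1 hA
            have hB' : B ∈ F0 k2 := hFpF0 k2 hB
            have := hov k1 k2 hne A (Finset.mem_filter.1 hA').1 B (Finset.mem_filter.1 hB').1
            have hμ'eq : μ' k1 k2 = μ k1 k2 := by
              simp only [hμ']
              rw [if_neg hk]
            omega
        have hjmem : j ∈ (Finset.univ : Finset (Fin ℓ)).erase i :=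
          Finset.mem_erase.2 ⟨hij.symm, Finset.mem_univ _⟩
        have hprodFp : (∏ k, (Fp k).card)
            = b i * (b j * ∏ k ∈ ((Finset.univ : Finset (Fin ℓ)).erase i).erase j, a k) := by
          rw [← Finset.mul_prod_erase Finset.univ _ (Finset.mem_univ i),
            ← Finset.mul_prod_erase _ _ hjmem]
          have e1 : (Fp i).card = b i := by
            simp only [hFp, if_pos rfl]
            exact hLcard i
          have e2 : (Fp j).card = b j := by
            show (if j = i then L i else if j = j then L j else F0 j).card = b j
            rw [if_neg (Ne.symm hij), if_pos rfl]
            exact hLcard j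
          have e3 : (∏ k ∈ ((Finset.univ : Finset (Fin ℓ)).erase i).erase j, (Fp k).card)
              = ∏ k ∈ ((Finset.univ : Finset (Fin ℓ)).erase i).erase j, a k := by
            apply Finset.prod_congr rfl
            intro k hk
            have hki : k ≠ i := Finset.ne_of_mem_erase (Finset.mem_of_mem_erase hk)
            have hkj : k ≠ j := Finset.ne_of_mem_erase hk
            show (if k = i then L i else if k = j then L j else F0 k).card = a k
            rw [if_neg hki, if_neg hkj]
          rw [e1, e2, e3]
        have houter := ihE (E - 1) (by omega) μ' hsym' hW' U' Fp hFpsub hFpdc hFpov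
        rw [hprodFp] at houter
        calc b i * b j * (∏ k ∈ ((Finset.univ : Finset (Fin ℓ)).erase i).erase j, a k)
            = b i * (b j * ∏ k ∈ ((Finset.univ : Finset (Fin ℓ)).erase i).erase j, a k) := by
              ring
          _ ≤ (1 + DD ℓ) ^ (E - 1) * 2 ^ U'.card * (n + 1) ^ (E - 1) := houter
          _ = PB * 2 ^ U'.card := by rw [hPB']; ring
    -- combine
    have hexp := prod_add_le a b Finset.univ (fun k _ => hba k)
    have hcardℓ : (Finset.univ : Finset (Fin ℓ)).card = ℓ := by simp
    rw [hcardℓ] at hexp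
    have hsum : (∑ q ∈ (Finset.univ : Finset (Fin ℓ)).offDiag,
          b q.1 * b q.2 * ∏ k ∈ ((Finset.univ.erase q.1).erase q.2), a k)
        ≤ (ℓ * ℓ) * (PB * 2 ^ U'.card) := by
      calc (∑ q ∈ (Finset.univ : Finset (Fin ℓ)).offDiag,
            b q.1 * b q.2 * ∏ k ∈ ((Finset.univ.erase q.1).erase q.2), a k)
          ≤ ((Finset.univ : Finset (Fin ℓ)).offDiag).card • (PB * 2 ^ U'.card) :=
            Finset.sum_le_card_nsmul _ _ _ hpair
        _ = ((Finset.univ : Finset (Fin ℓ)).offDiag).card * (PB * 2 ^ U'.card) := by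
            rw [smul_eq_mul]
        _ ≤ (ℓ * ℓ) * (PB * 2 ^ U'.card) := by
            apply Nat.mul_le_mul_right
            rw [Finset.offDiag_card]
            simp only [Finset.card_univ, Fintype.card_fin]
            omega
    calc (∏ k, (F k).card) = ∏ k, (a k + b k) := by
          apply Finset.prod_congr rfl
          intro k _
          exact hcardsplit k
      _ ≤ 2 * (∏ k, a k) + (2 ^ ℓ + 1) *
            ∑ q ∈ (Finset.univ : Finset (Fin ℓ)).offDiag,
              b q.1 * b q.2 * ∏ k ∈ ((Finset.univ.erase q.1).erase q.2), a k := hexp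
      _ ≤ 2 * (2 ^ U'.card * (1 + U'.card * (DD ℓ * PB)))
            + (2 ^ ℓ + 1) * ((ℓ * ℓ) * (PB * 2 ^ U'.card)) := by
          exact Nat.add_le_add (Nat.mul_le_mul_left 2 hProdA) (Nat.mul_le_mul_left _ hsum)
      _ ≤ 2 ^ U.card * (1 + U.card * (DD ℓ * PB)) := by
          have hDPB : (2 ^ ℓ + 1) * (ℓ * ℓ * (PB * 2 ^ U'.card)) = DD ℓ * PB * 2 ^ U'.card := by
            rw [DD]; ring
          have hexpand : 2 ^ (U'.card + 1) * (1 + (U'.card + 1) * (DD ℓ * PB))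
              = 2 * (2 ^ U'.card * (1 + U'.card * (DD ℓ * PB))) + 2 * (DD ℓ * PB * 2 ^ U'.card) := by
            rw [pow_succ]; ring
          rw [← hUcard, hexpand, hDPB]
          have : DD ℓ * PB * 2 ^ U'.card ≤ 2 * (DD ℓ * PB * 2 ^ U'.card) := by omega
          omega

/-- Upper bound without the down-closedness assumption. -/
lemma upper (n ℓ : ℕ) (E : ℕ) (μ : Fin ℓ → Fin ℓ → ℕ) (hsym : ∀ i j, μ i j = μ j i)
    (hW : (∑ q ∈ (Finset.univ : Finset (Fin ℓ)).offDiag, μ q.1 q.2) = 2 * E)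
    (F : Fin ℓ → Finset (Finset (Fin n))) (hov : Overlap μ F) :
    (∏ k, (F k).card) ≤ (1 + DD ℓ) ^ E * 2 ^ n * (n + 1) ^ E := by
  set DF : Fin ℓ → Finset (Finset (Fin n)) :=
    fun k => (Finset.univ : Finset (Fin n)).powerset.filter (fun B => ∃ A ∈ F k, B ⊆ A)
    with hDF
  have hFD : ∀ k, F k ⊆ DF k := by
    intro k A hA
    rw [hDF, Finset.mem_filter]
    exact ⟨Finset.mem_powerset.2 (Finset.subset_univ A), A, hA, Finset.Subset.refl A⟩
  have hsubDF : ∀ k, DF k ⊆ (Finset.univ : Finset (Fin n)).powerset := by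
    intro k B hB
    exact (Finset.mem_filter.1 hB).1
  have hdcDF : ∀ k, ∀ A ∈ DF k, ∀ B, B ⊆ A → B ∈ DF k := by
    intro k A hA B hBA
    rw [hDF, Finset.mem_filter] at hA ⊢
    obtain ⟨-, A₀, hA₀, hAA₀⟩ := hA
    exact ⟨Finset.mem_powerset.2 (Finset.subset_univ B), A₀, hA₀, hBA.trans hAA₀⟩
  have hovDF : Overlap μ DF := by
    intro k1 k2 hne A hA B hB
    rw [hDF, Finset.mem_filter] at hA hB
    obtain ⟨-, A₀, hA₀, hAA₀⟩ := hA
    obtain ⟨-, B₀, hB₀, hBB₀⟩ := hB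
    calc (A ∩ B).card ≤ (A₀ ∩ B₀).card :=
          Finset.card_le_card (Finset.inter_subset_inter hAA₀ hBB₀)
      _ ≤ μ k1 k2 := hov k1 k2 hne A₀ hA₀ B₀ hB₀
  have hn : (Finset.univ : Finset (Fin n)).card = n := by simp
  calc (∏ k, (F k).card) ≤ ∏ k, (DF k).card :=
        Finset.prod_le_prod' fun k _ => Finset.card_le_card (hFD k)
    _ ≤ (1 + DD ℓ) ^ E * 2 ^ (Finset.univ : Finset (Fin n)).card * (n + 1) ^ E :=
        upper_dc n ℓ E μ hsym hW Finset.univ DF hsubDF hdcDF hovDF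
    _ = (1 + DD ℓ) ^ E * 2 ^ n * (n + 1) ^ E := by rw [hn]

/-- Cardinality of the family of subsets of `W` of size at most 1. -/
lemma card_small {n : ℕ} (W : Finset (Fin n)) :
    (W.powerset.filter (fun S => S.card ≤ 1)).card = W.card + 1 := by
  have hdisj : Disjoint (Finset.powersetCard 0 W) (Finset.powersetCard 1 W) := by
    refine Finset.disjoint_left.2 ?_
    intro S hS hS'
    rw [Finset.mem_powersetCard] at hS hS'
    omega
  have hsplit : W.powerset.filter (fun S => S.card ≤ 1)
      = Finset.powersetCard 0 W ∪ Finset.powersetCard 1 W := by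
    ext S
    simp only [Finset.mem_filter, Finset.mem_powerset, Finset.mem_union,
      Finset.mem_powersetCard]
    by_cases hS : S ⊆ W
    · simp only [hS, true_and]
      omega
    · simp [hS]
  rw [hsplit, Finset.card_union_of_disjoint hdisj, Finset.card_powersetCard,
    Finset.card_powersetCard, Nat.choose_zero_right, Nat.choose_one_right]
  omega

/-- Cardinality of a union-image of a product of families over disjoint supports. -/
lemma card_union_image {n : ℕ} {U' W : Finset (Fin n)} (hd : Disjoint U' W)
    (𝒜 : Finset (Finset (Fin n))) (h𝒜 : ∀ A ∈ 𝒜, A ⊆ U')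
    (𝒮 : Finset (Finset (Fin n))) (h𝒮 : ∀ S ∈ 𝒮, S ⊆ W) :
    ((𝒜 ×ˢ 𝒮).image (fun pr => pr.1 ∪ pr.2)).card = 𝒜.card * 𝒮.card := by
  rw [← Finset.card_product]
  apply Finset.card_image_of_injOn
  rintro ⟨A1, S1⟩ h1 ⟨A2, S2⟩ h2 he
  simp only [Finset.mem_coe, Finset.mem_product] at h1 h2
  have he' : A1 ∪ S1 = A2 ∪ S2 := he
  have hAW : ∀ (A : Finset (Fin n)), A ⊆ U' → ∀ y ∈ A, y ∉ W := by
    intro A hAU y hyA hyW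
    exact (Finset.disjoint_left.1 hd) (hAU hyA) hyW
  have key : ∀ (A S A' S' : Finset (Fin n)), A ⊆ U' → S ⊆ W → A' ⊆ U' → S' ⊆ W →
      A ∪ S = A' ∪ S' → A = A' ∧ S = S' := by
    intro A S A' S' hA hS hA' hS' h
    constructor
    · ext y
      constructor
      · intro hy
        have : y ∈ A' ∪ S' := h ▸ Finset.mem_union_left S hy
        rcases Finset.mem_union.1 this with h' | h'
        · exact h'
        · exact absurd (hS' h') (hAW A hA y hy)
      · intro hy
        have : y ∈ A ∪ S := h.symm ▸ Finset.mem_union_left S' hy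
        rcases Finset.mem_union.1 this with h' | h'
        · exact h'
        · exact absurd (hS h') (hAW A' hA' y hy)
    · ext y
      constructor
      · intro hy
        have : y ∈ A' ∪ S' := h ▸ Finset.mem_union_right A hy
        rcases Finset.mem_union.1 this with h' | h'
        · exact absurd (hS hy) (hAW A' hA' y h')
        · exact h'
      · intro hy
        have : y ∈ A ∪ S := h.symm ▸ Finset.mem_union_right A' hy
        rcases Finset.mem_union.1 this with h' | h'
        · exact absurd (hS' hy) (hAW A hA y h')
        · exact h'
  obtain ⟨e1, e2⟩ := key A1 S1 A2 S2 (h𝒜 A1 h1.1) (h𝒮 S1 h1.2) (h𝒜 A2 h2.1) (h𝒮 S2 h2.2) he'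
  exact Prod.ext e1 e2

set_option maxHeartbeats 1000000 in
/-- Lower bound construction: an `μ`-overlapping system on ground set `U` with product
at least `2^{|U|} (g+1)^E`. -/
lemma lower (n ℓ : ℕ) (hℓ : 0 < ℓ) :
    ∀ E : ℕ, ∀ μ : Fin ℓ → Fin ℓ → ℕ, (∀ i j, μ i j = μ j i) →
      (∑ q ∈ (Finset.univ : Finset (Fin ℓ)).offDiag, μ q.1 q.2) = 2 * E →
      ∀ U : Finset (Fin n), ∀ g : ℕ, g * E ≤ U.card →
      ∃ F : Fin ℓ → Finset (Finset (Fin n)),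
        Overlap μ F ∧ (∀ k, F k ⊆ U.powerset) ∧
          2 ^ U.card * (g + 1) ^ E ≤ ∏ k, (F k).card := by
  intro E
  induction E with
  | zero =>
    intro μ hsym hW U g hg
    set k₀ : Fin ℓ := ⟨0, hℓ⟩ with hk₀
    set F0 : Fin ℓ → Finset (Finset (Fin n)) :=
      fun k => if k = k₀ then U.powerset else {∅} with hF0
    have hval0 : F0 k₀ = U.powerset := by
      show (if k₀ = k₀ then U.powerset else {∅}) = U.powerset
      rw [if_pos rfl]
    have hval : ∀ k, k ≠ k₀ → F0 k = {∅} := by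
      intro k hk
      show (if k = k₀ then U.powerset else {∅}) = {∅}
      rw [if_neg hk]
    refine ⟨F0, ?_, ?_, ?_⟩
    · intro k1 k2 hne A hA B hB
      by_cases h1 : k1 = k₀
      · have h2 : k2 ≠ k₀ := fun h => hne (h1.trans h.symm)
        rw [hval k2 h2, Finset.mem_singleton] at hB
        subst hB
        simp
      · rw [hval k1 h1, Finset.mem_singleton] at hA
        subst hA
        simp
    · intro k
      by_cases h1 : k = k₀
      · rw [h1, hval0]
      · rw [hval k h1]
        intro B hB
        rw [Finset.mem_singleton] at hB
        subst hB
        simp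
    · rw [pow_zero, mul_one,
        ← Finset.mul_prod_erase Finset.univ _ (Finset.mem_univ k₀), hval0,
        Finset.card_powerset]
      have hrest : (∏ k ∈ Finset.univ.erase k₀, (F0 k).card) = 1 := by
        apply Finset.prod_eq_one
        intro k hk
        rw [hval k (Finset.ne_of_mem_erase hk)]
        simp
      rw [hrest, mul_one]
  | succ E ih =>
    intro μ hsym hW U g hg
    have hpos : ∃ q ∈ (Finset.univ : Finset (Fin ℓ)).offDiag, 0 < μ q.1 q.2 := by
      by_contra hc
      push_neg at hc
      have hz : (∑ q ∈ (Finset.univ : Finset (Fin ℓ)).offDiag, μ q.1 q.2) = 0 :=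
        Finset.sum_eq_zero (fun q hq => Nat.le_zero.1 (hc q hq))
      omega
    obtain ⟨⟨i, j⟩, hq, hμpos⟩ := hpos
    obtain ⟨-, -, hij⟩ := Finset.mem_offDiag.1 hq
    have hij' : (i : Fin ℓ) ≠ j := hij
    have hμpos' : 0 < μ i j := hμpos
    have hμji : 0 < μ j i := by rw [← hsym i j]; exact hμpos'
    have hgU : g ≤ U.card := by
      calc g = g * 1 := by ring
        _ ≤ g * (E + 1) := Nat.mul_le_mul_left g (by omega)
        _ ≤ U.card := hg
    obtain ⟨W, hWU, hWcard⟩ := Finset.exists_subset_card_eq hgU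
    set U' := U \ W with hU'
    have hU'card : U'.card = U.card - g := by
      rw [hU', Finset.card_sdiff_of_subset hWU, hWcard]
    have hdisj : Disjoint U' W := Finset.sdiff_disjoint
    set μ' : Fin ℓ → Fin ℓ → ℕ := fun p q =>
      if (p = i ∧ q = j) ∨ (p = j ∧ q = i) then μ p q - 1 else μ p q with hμ'
    have hsym' : ∀ p q, μ' p q = μ' q p := by
      intro p q
      simp only [hμ']
      by_cases h : (p = i ∧ q = j) ∨ (p = j ∧ q = i)
      · rw [if_pos h, if_pos (by tauto), hsym]
      · rw [if_neg h, if_neg (by tauto), hsym]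
    have hqij : ((i, j) : Fin ℓ × Fin ℓ) ∈ (Finset.univ : Finset (Fin ℓ)).offDiag := by
      rw [Finset.mem_offDiag]
      exact ⟨Finset.mem_univ _, Finset.mem_univ _, hij'⟩
    have hqji : ((j, i) : Fin ℓ × Fin ℓ) ∈ (Finset.univ : Finset (Fin ℓ)).offDiag := by
      rw [Finset.mem_offDiag]
      exact ⟨Finset.mem_univ _, Finset.mem_univ _, Ne.symm hij'⟩
    have hne' : ((j, i) : Fin ℓ × Fin ℓ) ≠ (i, j) := by
      intro h
      exact hij' (congrArg Prod.snd h)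
    have decomp : ∀ g' : Fin ℓ × Fin ℓ → ℕ,
        (∑ q ∈ (Finset.univ : Finset (Fin ℓ)).offDiag, g' q)
          = g' (i, j) + (g' (j, i) +
              ∑ q ∈ (((Finset.univ : Finset (Fin ℓ)).offDiag).erase (i, j)).erase (j, i),
                g' q) := by
      intro g'
      rw [Finset.add_sum_erase _ g' (Finset.mem_erase.2 ⟨hne', hqji⟩),
        Finset.add_sum_erase _ g' hqij]
    have hW' : (∑ q ∈ (Finset.univ : Finset (Fin ℓ)).offDiag, μ' q.1 q.2) = 2 * E := by
      have h1 := decomp (fun q => μ' q.1 q.2)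
      have h2 := decomp (fun q => μ q.1 q.2)
      have hrest : (∑ q ∈ (((Finset.univ : Finset (Fin ℓ)).offDiag).erase (i, j)).erase (j, i),
            μ' q.1 q.2)
          = ∑ q ∈ (((Finset.univ : Finset (Fin ℓ)).offDiag).erase (i, j)).erase (j, i),
            μ q.1 q.2 := by
        apply Finset.sum_congr rfl
        intro q hq'
        have hq1 : q ≠ (j, i) := Finset.ne_of_mem_erase hq'
        have hq2 : q ≠ (i, j) := Finset.ne_of_mem_erase (Finset.mem_of_mem_erase hq')
        simp only [hμ']
        rw [if_neg]
        rintro (⟨e1, e2⟩ | ⟨e1, e2⟩)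
        · exact hq2 (Prod.ext e1 e2)
        · exact hq1 (Prod.ext e1 e2)
      have hija : μ' i j = μ i j - 1 := by
        show (if (i = i ∧ j = j) ∨ (i = j ∧ j = i) then μ i j - 1 else μ i j) = μ i j - 1
        rw [if_pos (Or.inl ⟨rfl, rfl⟩)]
      have hjia : μ' j i = μ j i - 1 := by
        show (if (j = i ∧ i = j) ∨ (j = j ∧ i = i) then μ j i - 1 else μ j i) = μ j i - 1
        rw [if_pos (Or.inr ⟨rfl, rfl⟩)]
      simp only at h1 h2
      rw [hrest, hija, hjia] at h1
      rw [hW] at h2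
      omega
    have hg' : g * E ≤ U'.card := by
      rw [hU'card]
      have : g * (E + 1) = g * E + g := by ring
      omega
    obtain ⟨F, hovF, hsubF, hprodF⟩ := ih μ' hsym' hW' U' g hg'
    have hFU' : ∀ k, ∀ A ∈ F k, A ⊆ U' := fun k A hA =>
      Finset.mem_powerset.1 (hsubF k hA)
    set Ki : Finset (Finset (Fin n)) :=
      (F i ×ˢ W.powerset).image (fun pr => pr.1 ∪ pr.2) with hKi
    set Kj : Finset (Finset (Fin n)) :=
      (F j ×ˢ (W.powerset.filter (fun S => S.card ≤ 1))).image (fun pr => pr.1 ∪ pr.2)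
      with hKj
    set K : Fin ℓ → Finset (Finset (Fin n)) :=
      fun k => if k = i then Ki else if k = j then Kj else F k with hK
    have hKval_i : K i = Ki := by
      show (if i = i then Ki else if i = j then Kj else F i) = Ki
      rw [if_pos rfl]
    have hKval_j : K j = Kj := by
      show (if j = i then Ki else if j = j then Kj else F j) = Kj
      rw [if_neg (Ne.symm hij'), if_pos rfl]
    have hKval : ∀ k, k ≠ i → k ≠ j → K k = F k := by
      intro k h1 h2
      show (if k = i then Ki else if k = j then Kj else F k) = F k
      rw [if_neg h1, if_neg h2]
    have hKmem : ∀ k C, C ∈ K k → ∃ A ∈ F k, ∃ S, S ⊆ W ∧ C = A ∪ S ∧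
        (k = j → S.card ≤ 1) ∧ (¬(k = i) → ¬(k = j) → S = ∅) := by
      intro k C hC
      by_cases h1 : k = i
      · rw [h1] at hC ⊢
        rw [hKval_i, hKi] at hC
        obtain ⟨⟨A, S⟩, hAS, rfl⟩ := Finset.mem_image.1 hC
        obtain ⟨hA, hS⟩ := Finset.mem_product.1 hAS
        exact ⟨A, hA, S, Finset.mem_powerset.1 hS, rfl,
          fun h => absurd h hij', fun h _ => absurd rfl h⟩
      · by_cases h2 : k = j
        · rw [h2] at hC ⊢
          rw [hKval_j, hKj] at hC
          obtain ⟨⟨A, S⟩, hAS, rfl⟩ := Finset.mem_image.1 hC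
          obtain ⟨hA, hS⟩ := Finset.mem_product.1 hAS
          rw [Finset.mem_filter, Finset.mem_powerset] at hS
          exact ⟨A, hA, S, hS.1, rfl, fun _ => hS.2, fun _ h => absurd rfl h⟩
        · rw [hKval k h1 h2] at hC
          exact ⟨C, hC, ∅, Finset.empty_subset W, by simp, fun hkj => absurd hkj h2,
            fun _ _ => rfl⟩
    have hovK : Overlap μ K := by
      intro k1 k2 hne C1 hC1 C2 hC2
      obtain ⟨A1, hA1, S1, hS1W, rfl, hS1j, hS1e⟩ := hKmem k1 C1 hC1
      obtain ⟨A2, hA2, S2, hS2W, rfl, hS2j, hS2e⟩ := hKmem k2 C2 hC2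
      have hsubint : (A1 ∪ S1) ∩ (A2 ∪ S2) ⊆ (A1 ∩ A2) ∪ (S1 ∩ S2) := by
        intro y hy
        rw [Finset.mem_inter, Finset.mem_union, Finset.mem_union] at hy
        rw [Finset.mem_union, Finset.mem_inter, Finset.mem_inter]
        by_cases hyW : y ∈ W
        · refine Or.inr ⟨?_, ?_⟩
          · rcases hy.1 with h | h
            · exact absurd hyW (Finset.disjoint_left.1 hdisj (hFU' k1 A1 hA1 h))
            · exact h
          · rcases hy.2 with h | h
            · exact absurd hyW (Finset.disjoint_left.1 hdisj (hFU' k2 A2 hA2 h))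
            · exact h
        · refine Or.inl ⟨?_, ?_⟩
          · rcases hy.1 with h | h
            · exact h
            · exact absurd (hS1W h) hyW
          · rcases hy.2 with h | h
            · exact h
            · exact absurd (hS2W h) hyW
      have hcardle : ((A1 ∪ S1) ∩ (A2 ∪ S2)).card ≤ (A1 ∩ A2).card + (S1 ∩ S2).card :=
        le_trans (Finset.card_le_card hsubint) (Finset.card_union_le _ _)
      have hAbound := hovF k1 k2 hne A1 hA1 A2 hA2
      by_cases hk : (k1 = i ∧ k2 = j) ∨ (k1 = j ∧ k2 = i)
      · have hμ'eq : μ' k1 k2 = μ k1 k2 - 1 := by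
          simp only [hμ']
          rw [if_pos hk]
        have hSbound : (S1 ∩ S2).card ≤ 1 := by
          rcases hk with ⟨-, h2⟩ | ⟨h1, -⟩
          · calc (S1 ∩ S2).card ≤ S2.card :=
                Finset.card_le_card Finset.inter_subset_right
              _ ≤ 1 := hS2j h2
          · calc (S1 ∩ S2).card ≤ S1.card :=
                Finset.card_le_card Finset.inter_subset_left
              _ ≤ 1 := hS1j h1
        have hμb : 0 < μ k1 k2 := by
          rcases hk with ⟨h1, h2⟩ | ⟨h1, h2⟩
          · rw [h1, h2]; exact hμpos'
          · rw [h1, h2]; exact hμji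
        omega
      · have hμ'eq : μ' k1 k2 = μ k1 k2 := by
          simp only [hμ']
          rw [if_neg hk]
        have hSempty : S1 ∩ S2 = ∅ := by
          by_cases e1 : S1 = ∅
          · rw [e1]; exact Finset.empty_inter S2
          · by_cases e2 : S2 = ∅
            · rw [e2]; exact Finset.inter_empty S1
            · exfalso
              have hk1 : k1 = i ∨ k1 = j := by
                by_contra hc
                push_neg at hc
                exact e1 (hS1e hc.1 hc.2)
              have hk2 : k2 = i ∨ k2 = j := by
                by_contra hc
                push_neg at hc
                exact e2 (hS2e hc.1 hc.2)
              rcases hk1 with h | h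
              · rcases hk2 with h' | h'
                · exact hne (h.trans h'.symm)
                · exact hk (Or.inl ⟨h, h'⟩)
              · rcases hk2 with h' | h'
                · exact hk (Or.inr ⟨h, h'⟩)
                · exact hne (h.trans h'.symm)
        rw [hSempty] at hcardle
        simp only [Finset.card_empty, add_zero] at hcardle
        omega
    have hsubK : ∀ k, K k ⊆ U.powerset := by
      intro k C hC
      obtain ⟨A, hA, S, hSW, rfl, -, -⟩ := hKmem k C hC
      rw [Finset.mem_powerset]
      intro y hy
      rcases Finset.mem_union.1 hy with h | h
      · have h' : y ∈ U' := hFU' k A hA h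
        rw [hU'] at h'
        exact (Finset.sdiff_subset) h'
      · exact hWU (hSW h)
    have hKicard : (K i).card = (F i).card * 2 ^ g := by
      rw [hKval_i, hKi, card_union_image hdisj (F i) (hFU' i) W.powerset
        (fun S hS => Finset.mem_powerset.1 hS), Finset.card_powerset, hWcard]
    have hKjcard : (K j).card = (F j).card * (g + 1) := by
      rw [hKval_j, hKj, card_union_image hdisj (F j) (hFU' j)
        (W.powerset.filter (fun S => S.card ≤ 1))
        (fun S hS => Finset.mem_powerset.1 (Finset.mem_filter.1 hS).1),
        card_small, hWcard]
    have hjmem : j ∈ (Finset.univ : Finset (Fin ℓ)).erase i :=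
      Finset.mem_erase.2 ⟨Ne.symm hij', Finset.mem_univ _⟩
    have hsplit : ∀ G : Fin ℓ → ℕ,
        (∏ k, G k) = G i * (G j * ∏ k ∈ ((Finset.univ : Finset (Fin ℓ)).erase i).erase j, G k) := by
      intro G
      rw [← Finset.mul_prod_erase Finset.univ G (Finset.mem_univ i),
        ← Finset.mul_prod_erase _ G hjmem]
    have hsF := hsplit (fun k => (F k).card)
    have hsK := hsplit (fun k => (K k).card)
    have hKeq : (∏ k ∈ ((Finset.univ : Finset (Fin ℓ)).erase i).erase j, (K k).card)
        = ∏ k ∈ ((Finset.univ : Finset (Fin ℓ)).erase i).erase j, (F k).card := by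
      apply Finset.prod_congr rfl
      intro k hk
      have hki : k ≠ i := Finset.ne_of_mem_erase (Finset.mem_of_mem_erase hk)
      have hkj : k ≠ j := Finset.ne_of_mem_erase hk
      rw [hKval k hki hkj]
    refine ⟨K, hovK, hsubK, ?_⟩
    have hUcard' : U.card = U'.card + g := by
      rw [hU'card]
      omega
    calc 2 ^ U.card * (g + 1) ^ (E + 1)
        = (2 ^ U'.card * (g + 1) ^ E) * (2 ^ g * (g + 1)) := by
          rw [hUcard']; ring
      _ ≤ (∏ k, (F k).card) * (2 ^ g * (g + 1)) :=
          Nat.mul_le_mul_right _ hprodF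
      _ = ((F i).card * 2 ^ g) * (((F j).card * (g + 1)) *
            ∏ k ∈ ((Finset.univ : Finset (Fin ℓ)).erase i).erase j, (F k).card) := by
          rw [hsF]; ring
      _ = (K i).card * ((K j).card *
            ∏ k ∈ ((Finset.univ : Finset (Fin ℓ)).erase i).erase j, (K k).card) := by
          rw [hKicard, hKjcard, hKeq]
      _ = ∏ k, (K k).card := hsK.symm

/-- For a symmetric matrix, the sum over the off-diagonal is twice the sum over
ordered pairs `p.1 < p.2`. -/
lemma sum_offDiag_symm {ℓ : ℕ} (f : Fin ℓ → Fin ℓ → ℕ) (hsym : ∀ i j, f i j = f j i) :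
    (∑ q ∈ (Finset.univ : Finset (Fin ℓ)).offDiag, f q.1 q.2)
      = 2 * ∑ q ∈ ((Finset.univ : Finset (Fin ℓ)) ×ˢ Finset.univ).filter
          (fun p => p.1 < p.2), f q.1 q.2 := by
  have hsplit : (Finset.univ : Finset (Fin ℓ)).offDiag
      = ((Finset.univ ×ˢ Finset.univ).filter (fun p : Fin ℓ × Fin ℓ => p.1 < p.2))
        ∪ ((Finset.univ ×ˢ Finset.univ).filter (fun p : Fin ℓ × Fin ℓ => p.2 < p.1)) := by
    ext ⟨p1, p2⟩
    simp only [Finset.mem_offDiag, Finset.mem_union, Finset.mem_filter, Finset.mem_product,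
      Finset.mem_univ, true_and]
    constructor
    · intro h
      exact lt_or_gt_of_ne h
    · rintro (h | h)
      · exact ne_of_lt h
      · exact ne_of_gt h
  have hdisj : Disjoint
      ((Finset.univ ×ˢ Finset.univ).filter (fun p : Fin ℓ × Fin ℓ => p.1 < p.2))
      ((Finset.univ ×ˢ Finset.univ).filter (fun p : Fin ℓ × Fin ℓ => p.2 < p.1)) := by
    refine Finset.disjoint_left.2 ?_
    intro p hp hp'
    rw [Finset.mem_filter] at hp hp'
    exact absurd hp'.2 (not_lt_of_gt hp.2)
  have hswap : (∑ q ∈ ((Finset.univ : Finset (Fin ℓ)) ×ˢ Finset.univ).filter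
        (fun p => p.2 < p.1), f q.1 q.2)
      = ∑ q ∈ ((Finset.univ : Finset (Fin ℓ)) ×ˢ Finset.univ).filter
        (fun p => p.1 < p.2), f q.1 q.2 := by
    apply Finset.sum_nbij' (i := Prod.swap) (j := Prod.swap)
    · intro q hq
      rw [Finset.mem_filter] at hq ⊢
      exact ⟨Finset.mem_product.2 ⟨Finset.mem_univ _, Finset.mem_univ _⟩, hq.2⟩
    · intro q hq
      rw [Finset.mem_filter] at hq ⊢
      exact ⟨Finset.mem_product.2 ⟨Finset.mem_univ _, Finset.mem_univ _⟩, hq.2⟩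
    · intro q _
      exact Prod.swap_swap q
    · intro q _
      exact Prod.swap_swap q
    · intro q _
      exact hsym q.1 q.2
  rw [hsplit, Finset.sum_union hdisj, hswap]
  ring

end MultDeg

set_option maxHeartbeats 1000000 in
/-- multiplicative property of degrees, Proposition 9 of the paper.
Fix `ℓ ≥ 2` and symmetric `𝐦`. There is `C_D > 0` such that for every `n ≥ 1`, every
extremal `𝐦`-overlapping tuple `𝓕` on `[n]`, every `K ⊆ [ℓ]`, and sets `F_k ∈ 𝓕_k`
for `k ∈ K`, one has `Π_{k ∈ K} d_k(F_k) ≤ C_D · n^{−Σ_{{k,k'} ⊆ K} |F_k ∩ F_{k'}|}`. -/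
theorem multiplicative_degrees (ℓ : ℕ) (hℓ : 2 ≤ ℓ) (m : Fin ℓ → Fin ℓ → ℕ)
    (hsym : ∀ k1 k2, m k1 k2 = m k2 k1) :
    ∃ CD : ℝ, 0 < CD ∧ ∀ n : ℕ, 1 ≤ n →
      ∀ F : Fin ℓ → Finset (Finset (Fin n)), Extremal m F →
        ∀ K : Finset (Fin ℓ), ∀ G : Fin ℓ → Finset (Fin n),
          (∀ k ∈ K, G k ∈ F k) →
          ∏ k ∈ K, deg F k (G k) ≤
            CD / (n : ℝ) ^
              (∑ p ∈ (K ×ˢ K).filter (fun p => p.1 < p.2), (G p.1 ∩ G p.2).card) := by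
  classical
  set M : ℕ := ∑ q ∈ ((Finset.univ : Finset (Fin ℓ)) ×ˢ Finset.univ).filter
    (fun p => p.1 < p.2), m q.1 q.2 with hM
  set CDnat : ℕ := (1 + MultDeg.DD ℓ) ^ M * 2 ^ M * M ^ M with hCDnat
  refine ⟨(CDnat : ℝ) + 1, by positivity, ?_⟩
  intro n hn F hext K G hGF
  set t : ℕ := ∑ p ∈ (K ×ˢ K).filter (fun p => p.1 < p.2), (G p.1 ∩ G p.2).card with ht
  have hdeg0 : ∀ k, 0 ≤ deg F k (G k) := by
    intro k
    rw [deg]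
    positivity
  have hdeg1 : ∀ k, deg F k (G k) ≤ 1 := by
    intro k
    rcases Nat.eq_zero_or_pos (F k).card with h0 | hpos
    · rw [deg, h0]
      simp
    · rw [deg, div_le_one (by exact_mod_cast hpos)]
      exact_mod_cast Finset.card_le_card (Finset.filter_subset _ _)
  rcases Nat.eq_zero_or_pos t with ht0 | htpos
  · -- trivial case : exponent is zero
    rw [ht0]
    calc (∏ k ∈ K, deg F k (G k)) ≤ 1 :=
          Finset.prod_le_one (fun k _ => hdeg0 k) (fun k _ => hdeg1 k)
      _ ≤ ((CDnat : ℝ) + 1) / (n : ℝ) ^ (0 : ℕ) := by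
          rw [pow_zero, div_one]
          have : (0:ℝ) ≤ (CDnat : ℝ) := by positivity
          linarith
  · -- main case
    set N : Fin ℓ → ℕ := fun k => ((F k).filter (fun A => G k ⊆ A)).card with hN
    set μ' : Fin ℓ → Fin ℓ → ℕ := fun i j => m i j -
      (if i ∈ K ∧ j ∈ K ∧ i ≠ j then (G i ∩ G j).card else 0) with hμ'
    have hδle : ∀ i j, i ∈ K → j ∈ K → i ≠ j → (G i ∩ G j).card ≤ m i j :=
      fun i j hi hj hne => hext.1 i j hne (G i) (hGF i hi) (G j) (hGF j hj)
    have hsym' : ∀ i j, μ' i j = μ' j i := by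
      intro i j
      simp only [hμ']
      by_cases h : i ∈ K ∧ j ∈ K ∧ i ≠ j
      · rw [if_pos h, if_pos ⟨h.2.1, h.1, h.2.2.symm⟩, hsym i j, Finset.inter_comm]
      · rw [if_neg h, if_neg (fun hc => h ⟨hc.2.1, hc.1, fun e => hc.2.2 e.symm⟩), hsym i j]
    set E' : ℕ := ∑ q ∈ ((Finset.univ : Finset (Fin ℓ)) ×ˢ Finset.univ).filter
      (fun p => p.1 < p.2), μ' q.1 q.2 with hE'
    have hE't : E' + t = M := by
      have hδsum : t = ∑ q ∈ ((Finset.univ : Finset (Fin ℓ)) ×ˢ Finset.univ).filter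
          (fun p => p.1 < p.2),
          (if q.1 ∈ K ∧ q.2 ∈ K ∧ q.1 ≠ q.2 then (G q.1 ∩ G q.2).card else 0) := by
        rw [ht]
        rw [show (∑ p ∈ (K ×ˢ K).filter (fun p => p.1 < p.2), (G p.1 ∩ G p.2).card)
            = ∑ q ∈ (K ×ˢ K).filter (fun p => p.1 < p.2),
              (if q.1 ∈ K ∧ q.2 ∈ K ∧ q.1 ≠ q.2 then (G q.1 ∩ G q.2).card else 0) from ?_]
        · apply Finset.sum_subset
          · intro q hq
            rw [Finset.mem_filter] at hq ⊢
            rw [Finset.mem_product] at hq ⊢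
            exact ⟨⟨Finset.mem_univ _, Finset.mem_univ _⟩, hq.2⟩
          · intro q hq hnq
            rw [Finset.mem_filter] at hq
            rw [if_neg]
            intro hc
            apply hnq
            rw [Finset.mem_filter, Finset.mem_product]
            exact ⟨⟨hc.1, hc.2.1⟩, hq.2⟩
        · apply Finset.sum_congr rfl
          intro q hq
          rw [Finset.mem_filter, Finset.mem_product] at hq
          rw [if_pos ⟨hq.1.1, hq.1.2, ne_of_lt hq.2⟩]
      rw [hδsum, hE', hM, ← Finset.sum_add_distrib]
      apply Finset.sum_congr rfl
      intro q hq
      simp only [hμ']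
      by_cases h : q.1 ∈ K ∧ q.2 ∈ K ∧ q.1 ≠ q.2
      · rw [if_pos h]
        exact Nat.sub_add_cancel (hδle _ _ h.1 h.2.1 h.2.2)
      · rw [if_neg h]
        omega
    set F' : Fin ℓ → Finset (Finset (Fin n)) := fun k =>
      if k ∈ K then ((F k).filter (fun A => G k ⊆ A)).image (fun A => A \ G k) else F k
      with hF'
    have hF'K : ∀ k ∈ K, F' k = ((F k).filter (fun A => G k ⊆ A)).image (fun A => A \ G k) := by
      intro k hk
      show (if k ∈ K then _ else _) = _
      rw [if_pos hk]
    have hF'not : ∀ k ∉ K, F' k = F k := by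
      intro k hk
      show (if k ∈ K then _ else _) = _
      rw [if_neg hk]
    have hF'cardK : ∀ k ∈ K, (F' k).card = N k := by
      intro k hk
      rw [hF'K k hk, hN]
      apply Finset.card_image_of_injOn
      intro A hA B hB hAB
      simp only [Finset.coe_filter, Set.mem_setOf_eq] at hA hB
      have hAB' : A \ G k = B \ G k := hAB
      have hA' : A = (A \ G k) ∪ G k := (Finset.sdiff_union_of_subset hA.2).symm
      have hB' : B = (B \ G k) ∪ G k := (Finset.sdiff_union_of_subset hB.2).symm
      rw [hA', hB', hAB']
    have hmemF' : ∀ k C, C ∈ F' k → ∃ A ∈ F k, C ⊆ A ∧ (k ∈ K → G k ⊆ A ∧ C = A \ G k) := by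
      intro k C hC
      by_cases hk : k ∈ K
      · rw [hF'K k hk] at hC
        obtain ⟨A, hA, rfl⟩ := Finset.mem_image.1 hC
        rw [Finset.mem_filter] at hA
        exact ⟨A, hA.1, Finset.sdiff_subset, fun _ => ⟨hA.2, rfl⟩⟩
      · rw [hF'not k hk] at hC
        exact ⟨C, hC, Finset.Subset.refl C, fun h => absurd h hk⟩
    have hovF' : Overlap μ' F' := by
      intro k1 k2 hne C1 hC1 C2 hC2
      obtain ⟨A, hA, hC1A, hmem1⟩ := hmemF' k1 C1 hC1
      obtain ⟨B, hB, hC2B, hmem2⟩ := hmemF' k2 C2 hC2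
      have hABm := hext.1 k1 k2 hne A hA B hB
      by_cases hk : k1 ∈ K ∧ k2 ∈ K
      · obtain ⟨hG1A, rfl⟩ := hmem1 hk.1
        obtain ⟨hG2B, rfl⟩ := hmem2 hk.2
        have hsub1 : (A \ G k1) ∩ (B \ G k2) ⊆ A ∩ B :=
          Finset.inter_subset_inter Finset.sdiff_subset Finset.sdiff_subset
        have hsub2 : G k1 ∩ G k2 ⊆ A ∩ B := Finset.inter_subset_inter hG1A hG2B
        have hdisj2 : Disjoint ((A \ G k1) ∩ (B \ G k2)) (G k1 ∩ G k2) := by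
          refine Finset.disjoint_left.2 ?_
          intro y hy hy'
          rw [Finset.mem_inter, Finset.mem_sdiff] at hy
          rw [Finset.mem_inter] at hy'
          exact hy.1.2 hy'.1
        have hcard : ((A \ G k1) ∩ (B \ G k2)).card + (G k1 ∩ G k2).card ≤ (A ∩ B).card := by
          rw [← Finset.card_union_of_disjoint hdisj2]
          exact Finset.card_le_card (Finset.union_subset hsub1 hsub2)
        have hμeq : μ' k1 k2 = m k1 k2 - (G k1 ∩ G k2).card := by
          simp only [hμ']
          rw [if_pos ⟨hk.1, hk.2, hne⟩]
        omega
      · have hμeq : μ' k1 k2 = m k1 k2 := by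
          simp only [hμ']
          rw [if_neg (fun hc => hk ⟨hc.1, hc.2.1⟩)]
          omega
        have hle : (C1 ∩ C2).card ≤ (A ∩ B).card :=
          Finset.card_le_card (Finset.inter_subset_inter hC1A hC2B)
        omega
    have hW' : (∑ q ∈ (Finset.univ : Finset (Fin ℓ)).offDiag, μ' q.1 q.2) = 2 * E' :=
      MultDeg.sum_offDiag_symm μ' hsym'
    have hupper := MultDeg.upper n ℓ E' μ' hsym' hW' F' hovF'
    -- product splitting
    have hKuniv : Finset.univ.filter (fun k => k ∈ K) = K := by
      ext k
      simp
    set PT : ℕ := ∏ k, (F' k).card with hPT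
    set PA : ℕ := ∏ k, (F k).card with hPA
    have hPTsplit : PT = (∏ k ∈ K, N k) *
        (∏ k ∈ Finset.univ.filter (fun k => k ∉ K), (F k).card) := by
      rw [hPT, ← Finset.prod_filter_mul_prod_filter_not Finset.univ (fun k => k ∈ K)]
      congr 1
      · rw [hKuniv]
        exact Finset.prod_congr rfl hF'cardK
      · apply Finset.prod_congr rfl
        intro k hk
        rw [Finset.mem_filter] at hk
        rw [hF'not k hk.2]
    have hPAsplit : PA = (∏ k ∈ K, (F k).card) *
        (∏ k ∈ Finset.univ.filter (fun k => k ∉ K), (F k).card) := by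
      rw [hPA, ← Finset.prod_filter_mul_prod_filter_not Finset.univ (fun k => k ∈ K), hKuniv]
    -- lower bound via extremality
    have hMpos : 0 < M := by omega
    have hWm : (∑ q ∈ (Finset.univ : Finset (Fin ℓ)).offDiag, m q.1 q.2) = 2 * M :=
      MultDeg.sum_offDiag_symm m (fun i j => hsym i j)
    set g : ℕ := n / M with hg
    have hgle : g * M ≤ (Finset.univ : Finset (Fin n)).card := by
      have : (Finset.univ : Finset (Fin n)).card = n := by simp
      rw [this]
      exact Nat.div_mul_le_self n M
    obtain ⟨Fc, hovFc, -, hlowc⟩ :=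
      MultDeg.lower n ℓ (by omega) M m (fun i j => hsym i j) hWm Finset.univ g hgle
    have hunivcard : (Finset.univ : Finset (Fin n)).card = n := by simp
    have hPAlow : 2 ^ n * (g + 1) ^ M ≤ PA := by
      rw [hunivcard] at hlowc
      exact le_trans hlowc (hext.2 Fc hovFc)
    have hPApos : 0 < PA := lt_of_lt_of_le (by positivity) hPAlow
    have hcardpos : ∀ k, 0 < (F k).card := by
      intro k
      by_contra h
      push_neg at h
      have h0 : (F k).card = 0 := by omega
      have hz : PA = 0 := by
        rw [hPA]
        exact Finset.prod_eq_zero (Finset.mem_univ k) h0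
      omega
    -- the natural-number key inequality
    have hnM : n ≤ M * (g + 1) := le_of_lt (Nat.lt_mul_div_succ n hMpos)
    have hE'M : E' ≤ M := by omega
    have hDD1 : 1 ≤ 1 + MultDeg.DD ℓ := by omega
    have hkey : PT * n ^ t ≤ CDnat * PA := by
      calc PT * n ^ t
          ≤ ((1 + MultDeg.DD ℓ) ^ E' * 2 ^ n * (n + 1) ^ E') * n ^ t :=
            Nat.mul_le_mul_right _ hupper
        _ ≤ ((1 + MultDeg.DD ℓ) ^ M * 2 ^ n * (2 * n) ^ E') * n ^ t := by
            apply Nat.mul_le_mul_right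
            apply Nat.mul_le_mul
            · apply Nat.mul_le_mul_right
              exact Nat.pow_le_pow_right hDD1 hE'M
            · exact Nat.pow_le_pow_left (by omega) _
        _ = (1 + MultDeg.DD ℓ) ^ M * 2 ^ E' * 2 ^ n * n ^ M := by
            rw [mul_pow, ← hE't, pow_add]
            ring
        _ ≤ (1 + MultDeg.DD ℓ) ^ M * 2 ^ M * 2 ^ n * n ^ M := by
            have h2 : (2:ℕ) ^ E' ≤ 2 ^ M := Nat.pow_le_pow_right (by omega) hE'M
            apply Nat.mul_le_mul_right
            apply Nat.mul_le_mul_right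
            exact Nat.mul_le_mul_left _ h2
        _ ≤ (1 + MultDeg.DD ℓ) ^ M * 2 ^ M * 2 ^ n * (M ^ M * (g + 1) ^ M) := by
            have h3 : n ^ M ≤ (M * (g + 1)) ^ M := Nat.pow_le_pow_left hnM M
            rw [mul_pow] at h3
            exact Nat.mul_le_mul_left _ h3
        _ = CDnat * (2 ^ n * (g + 1) ^ M) := by
            rw [hCDnat]
            ring
        _ ≤ CDnat * PA := Nat.mul_le_mul_left _ hPAlow
    -- pass to the reals
    have hXpos : (0:ℝ) < ∏ k ∈ Finset.univ.filter (fun k => k ∉ K), ((F k).card : ℝ) := by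
      apply Finset.prod_pos
      intro k _
      exact_mod_cast hcardpos k
    have hLHS : (∏ k ∈ K, deg F k (G k)) = (PT : ℝ) / (PA : ℝ) := by
      have h1 : (∏ k ∈ K, deg F k (G k))
          = (∏ k ∈ K, (N k : ℝ)) / (∏ k ∈ K, ((F k).card : ℝ)) := by
        rw [← Finset.prod_div_distrib]
        apply Finset.prod_congr rfl
        intro k _
        rfl
      rw [h1, hPTsplit, hPAsplit]
      push_cast
      rw [mul_div_mul_right _ _ (ne_of_gt hXpos)]
    rw [hLHS]
    have hnRpos : (0:ℝ) < (n : ℝ) ^ t := by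
      have : (0:ℝ) < (n:ℝ) := by exact_mod_cast hn
      positivity
    have hPARpos : (0:ℝ) < (PA : ℝ) := by exact_mod_cast hPApos
    rw [div_le_div_iff₀ hPARpos hnRpos]
    have hkeyR : (PT : ℝ) * (n:ℝ) ^ t ≤ (CDnat : ℝ) * (PA : ℝ) := by
      have := hkey
      exact_mod_cast this
    have hPAR0 : (0:ℝ) ≤ (PA : ℝ) := le_of_lt hPARpos
    nlinarith [hkeyR, hPAR0]

end
end

section
/- Let X be a finite set and let 𝓐_1,…,𝓐_m be finite nonempty families of subsets of X. For each k ∈ [m] define 𝓑_k to be the family of all sets of the form ⋃_{S} c_S, where S ranges over all k-element subsets of [m] and, for each such S, c_S is a member of ⋀_{s∈S} 𝓐_s. Then Π_{k=1}^{m} |𝓐_k| ≤ Π_{k=1}^{m} |𝓑_k|. -/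
open scoped Classical

open Finset

/-- Core numeric lemma: if `r` is antitone on `[0,n)` and every prefix product of `r`
is at most the corresponding prefix product of `s`, then `∏(1+r) ≤ ∏(1+s)`. -/
lemma lemR : ∀ (n : ℕ) (r s : ℕ → ℝ), (∀ i, 0 ≤ r i) → (∀ i, 0 ≤ s i) →
    (∀ i j, i ≤ j → j < n → r j ≤ r i) →
    (∀ k, k ≤ n → ∏ i ∈ range k, r i ≤ ∏ i ∈ range k, s i) →
    ∏ i ∈ range n, (1 + r i) ≤ ∏ i ∈ range n, (1 + s i) := by
  intro n
  induction n with
  | zero => intro r s _ _ _ _; simp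
  | succ n IH =>
    intro r s hr0 hs0 hmono hpre
    by_cases hc : r n ≤ s n
    · rw [prod_range_succ, prod_range_succ]
      have h1 : ∏ i ∈ range n, (1 + r i) ≤ ∏ i ∈ range n, (1 + s i) :=
        IH r s hr0 hs0 (fun i j hij hj => hmono i j hij (by omega))
          (fun k hk => hpre k (by omega))
      have hpos : (0:ℝ) ≤ ∏ i ∈ range n, (1 + r i) :=
        prod_nonneg fun i _ => by linarith [hr0 i]
      nlinarith [hr0 n, hs0 n, prod_nonneg (fun i (_ : i ∈ range n) => by linarith [hs0 i] : ∀ i ∈ range n, (0:ℝ) ≤ 1 + s i)]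
    · push_neg at hc   -- s n < r n
      have hrn : 0 < r n := lt_of_le_of_lt (hs0 n) hc
      have hrpos : ∀ i, i ≤ n → 0 < r i := fun i hi => lt_of_lt_of_le hrn (hmono i n hi (by omega))
      -- all s i are positive for i ≤ n
      have hRpos : 0 < ∏ i ∈ range (n+1), r i :=
        prod_pos fun i hi => hrpos i (Nat.lt_succ_iff.mp (mem_range.mp hi))
      have hSfull : ∏ i ∈ range (n+1), r i ≤ ∏ i ∈ range (n+1), s i := hpre (n+1) le_rfl
      have hspos : ∀ i, i ≤ n → 0 < s i := by
        intro i hi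
        by_contra hsi
        push_neg at hsi
        have : s i = 0 := le_antisymm hsi (hs0 i)
        have : ∏ j ∈ range (n+1), s j = 0 :=
          prod_eq_zero (mem_range.mpr (by omega)) this
        linarith [hRpos, hSfull]
      -- largest index j ≤ n with r j ≤ s j
      have h0 : r 0 ≤ s 0 := by simpa using hpre 1 (by omega)
      set j := Nat.findGreatest (fun j => r j ≤ s j) n with hj
      have hjP : r j ≤ s j := Nat.findGreatest_spec (P := fun j => r j ≤ s j) (Nat.zero_le n) h0
      have hjle : j ≤ n := Nat.findGreatest_le n
      have hjlt : j < n := by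
        rcases Nat.lt_or_ge j n with h | h
        · exact h
        · exfalso; have : j = n := le_antisymm hjle h
          rw [this] at hjP; linarith
      have hgt : ∀ i, j < i → i ≤ n → s i < r i := by
        intro i h1 h2
        have := Nat.findGreatest_is_greatest (P := fun j => r j ≤ s j) (n := n) h1 h2
        exact not_le.mp this
      -- the swap
      set s' : ℕ → ℝ := Function.update (Function.update s j (s j * s n / r n)) n (r n) with hs'
      have hjn : j ≠ n := Nat.ne_of_lt hjlt
      have hs'j : s' j = s j * s n / r n := by
        rw [hs', Function.update_of_ne hjn, Function.update_self]
      have hs'n : s' n = r n := by rw [hs', Function.update_self]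
      have hs'other : ∀ i, i ≠ j → i ≠ n → s' i = s i := by
        intro i h1 h2
        rw [hs', Function.update_of_ne h2, Function.update_of_ne h1]
      have hs'0 : ∀ i, 0 ≤ s' i := by
        intro i
        by_cases h1 : i = n
        · rw [h1, hs'n]; exact hrn.le
        by_cases h2 : i = j
        · rw [h2, hs'j]
          have := hs0 j; have := hs0 n
          positivity
        · rw [hs'other i h2 h1]; exact hs0 i
      -- prefix bounds for s'
      have hrnle : r n ≤ s j := le_trans (hmono j n hjlt.le (by omega)) hjP
      have hpre' : ∀ k, k ≤ n → ∏ i ∈ range k, r i ≤ ∏ i ∈ range k, s' i := by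
        intro k hk
        by_cases hkj : k ≤ j
        · have : ∏ i ∈ range k, s' i = ∏ i ∈ range k, s i := by
            refine prod_congr rfl fun i hi => hs'other i ?_ ?_ <;>
              · have := mem_range.mp hi; omega
          rw [this]; exact hpre k (by omega)
        · push_neg at hkj   -- j < k
          have hjk : j ∈ range k := mem_range.mpr hkj
          have e1 : ∏ i ∈ range k, s' i = (s j * s n / r n) * ∏ i ∈ (range k).erase j, s i := by
            rw [← Finset.mul_prod_erase (range k) s' hjk, hs'j]
            congr 1
            refine prod_congr rfl fun i hi => hs'other i (Finset.ne_of_mem_erase hi) ?_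
            have := mem_range.mp (Finset.mem_of_mem_erase hi); omega
          have e2 : ∏ i ∈ range k, s i = s j * ∏ i ∈ (range k).erase j, s i :=
            (Finset.mul_prod_erase (range k) s hjk).symm
          have hIco : ∏ i ∈ Ico k n, s i ≤ ∏ i ∈ Ico k n, r i := by
            refine prod_le_prod (fun i _ => hs0 i) fun i hi => ?_
            have := mem_Ico.mp hi
            exact (hgt i (by omega) (by omega)).le
          have hIcopos : 0 < ∏ i ∈ Ico k n, s i :=
            prod_pos fun i hi => hspos i (by have := mem_Ico.mp hi; omega)
          have hsplit : ∀ f : ℕ → ℝ, ∏ i ∈ range (n+1), f i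
              = (∏ i ∈ range k, f i) * (∏ i ∈ Ico k n, f i) * f n := by
            intro f
            rw [prod_range_succ, Finset.prod_range_mul_prod_Ico f (by omega : k ≤ n)]
          have hfull : (∏ i ∈ range k, r i) * (∏ i ∈ Ico k n, r i) * r n
              ≤ (∏ i ∈ range k, s i) * (∏ i ∈ Ico k n, s i) * s n := by
            rw [← hsplit r, ← hsplit s]; exact hSfull
          have hRk : 0 ≤ ∏ i ∈ range k, r i := prod_nonneg fun i _ => hr0 i
          have hchain : (∏ i ∈ range k, r i) * (∏ i ∈ Ico k n, s i) * r n
              ≤ (∏ i ∈ range k, s i) * (∏ i ∈ Ico k n, s i) * s n := by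
            calc (∏ i ∈ range k, r i) * (∏ i ∈ Ico k n, s i) * r n
                ≤ (∏ i ∈ range k, r i) * (∏ i ∈ Ico k n, r i) * r n := by
                  have h1 : (0:ℝ) ≤ (∏ i ∈ range k, r i) * r n := mul_nonneg hRk hrn.le
                  calc (∏ i ∈ range k, r i) * (∏ i ∈ Ico k n, s i) * r n
                      = ((∏ i ∈ range k, r i) * r n) * (∏ i ∈ Ico k n, s i) := by ring
                    _ ≤ ((∏ i ∈ range k, r i) * r n) * (∏ i ∈ Ico k n, r i) :=
                        mul_le_mul_of_nonneg_left hIco h1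
                    _ = (∏ i ∈ range k, r i) * (∏ i ∈ Ico k n, r i) * r n := by ring
              _ ≤ _ := hfull
          have hkey : (∏ i ∈ range k, r i) * r n ≤ (∏ i ∈ range k, s i) * s n := by
            have := hchain
            have h2 : (∏ i ∈ range k, r i) * r n * (∏ i ∈ Ico k n, s i)
                ≤ (∏ i ∈ range k, s i) * s n * (∏ i ∈ Ico k n, s i) := by
              calc (∏ i ∈ range k, r i) * r n * (∏ i ∈ Ico k n, s i)
                  = (∏ i ∈ range k, r i) * (∏ i ∈ Ico k n, s i) * r n := by ring
                _ ≤ (∏ i ∈ range k, s i) * (∏ i ∈ Ico k n, s i) * s n := hchain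
                _ = (∏ i ∈ range k, s i) * s n * (∏ i ∈ Ico k n, s i) := by ring
            exact le_of_mul_le_mul_right h2 hIcopos
          rw [e1]
          rw [e2] at hkey
          have heq : s j * s n / r n * ∏ i ∈ (range k).erase j, s i
              = (s j * ∏ i ∈ (range k).erase j, s i) * s n / r n := by ring
          rw [heq, le_div_iff₀ hrn]
          linarith [hkey]
      -- apply IH
      have hIH : ∏ i ∈ range n, (1 + r i) ≤ ∏ i ∈ range n, (1 + s' i) :=
        IH r s' hr0 hs'0 (fun i j hij hj => hmono i j hij (by omega))
          (fun k hk => hpre' k hk)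
      have step1 : ∏ i ∈ range (n+1), (1 + r i) ≤ ∏ i ∈ range (n+1), (1 + s' i) := by
        rw [prod_range_succ, prod_range_succ, hs'n]
        refine mul_le_mul_of_nonneg_right hIH ?_
        linarith [hrn]
      refine le_trans step1 ?_
      -- final comparison ∏(1+s') ≤ ∏(1+s)
      have hnmem : n ∈ range (n+1) := mem_range.mpr (by omega)
      have hjmem : j ∈ (range (n+1)).erase n := by
        rw [Finset.mem_erase]; exact ⟨hjn, mem_range.mpr (by omega)⟩
      have hsplit2 : ∀ f : ℕ → ℝ, ∏ i ∈ range (n+1), (1 + f i)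
          = (1 + f n) * ((1 + f j) * ∏ i ∈ ((range (n+1)).erase n).erase j, (1 + f i)) := by
        intro f
        rw [← Finset.mul_prod_erase (range (n+1)) (fun i => 1 + f i) hnmem,
          ← Finset.mul_prod_erase ((range (n+1)).erase n) (fun i => 1 + f i) hjmem]
      rw [hsplit2 s', hsplit2 s]
      have hrest : ∏ i ∈ ((range (n+1)).erase n).erase j, (1 + s' i)
          = ∏ i ∈ ((range (n+1)).erase n).erase j, (1 + s i) := by
        refine prod_congr rfl fun i hi => ?_
        rw [hs'other i (Finset.ne_of_mem_erase hi)
          (Finset.ne_of_mem_erase (Finset.mem_of_mem_erase hi))]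
      rw [hrest, hs'n, hs'j]
      have hrestpos : (0:ℝ) ≤ ∏ i ∈ ((range (n+1)).erase n).erase j, (1 + s i) :=
        prod_nonneg fun i _ => by linarith [hs0 i]
      have hhead : (1 + r n) * (1 + s j * s n / r n) ≤ (1 + s n) * (1 + s j) := by
        have hX : s j * s n / r n * r n = s j * s n := div_mul_cancel₀ _ hrn.ne'
        have hkey2 : s j * s n / r n ≤ s j + s n - r n := by
          rw [div_le_iff₀ hrn]
          nlinarith [mul_nonneg (sub_nonneg.mpr hrnle) (sub_nonneg.mpr hc.le)]
        have hXnn : 0 ≤ s j * s n / r n := div_nonneg (mul_nonneg (hs0 j) (hs0 n)) hrn.le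
        nlinarith [hrn, hs0 j, hs0 n]
      calc (1 + r n) * ((1 + s j * s n / r n) * ∏ i ∈ ((range (n+1)).erase n).erase j, (1 + s i))
          = ((1 + r n) * (1 + s j * s n / r n)) * ∏ i ∈ ((range (n+1)).erase n).erase j, (1 + s i) := by ring
        _ ≤ ((1 + s n) * (1 + s j)) * ∏ i ∈ ((range (n+1)).erase n).erase j, (1 + s i) :=
            mul_le_mul_of_nonneg_right hhead hrestpos
        _ = (1 + s n) * ((1 + s j) * ∏ i ∈ ((range (n+1)).erase n).erase j, (1 + s i)) := by ring

/-- Boolean-level multi-function Ahlswede–Daykin lemma. -/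
lemma lemBool : ∀ (n : ℕ) (D : ℝ) (a b c d : Fin n → ℝ), 0 ≤ D →
    (∀ i, 0 ≤ a i) → (∀ i, 0 ≤ b i) → (∀ i, 0 ≤ c i) → (∀ i, 0 ≤ d i) →
    (∀ T : Finset (Fin n),
      ∏ i, (if i ∈ T then a i else b i) ≤ D * ∏ i : Fin n, (if (i : ℕ) < T.card then c i else d i)) →
    ∏ i, (a i + b i) ≤ D * ∏ i, (c i + d i) := by
  intro n
  induction n with
  | zero =>
    intro D a b c d hD _ _ _ _ H
    simpa using H ∅
  | succ m IH =>
    intro D a b c d hD ha hb hc hd H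
    by_cases hab : ∃ i, a i = 0 ∧ b i = 0
    · -- trivial case : a zero pair
      obtain ⟨i₀, hai, hbi⟩ := hab
      have : ∏ i, (a i + b i) = 0 :=
        Finset.prod_eq_zero (Finset.mem_univ i₀) (by rw [hai, hbi]; ring)
      rw [this]
      exact mul_nonneg hD (Finset.prod_nonneg fun i _ => by linarith [hc i, hd i])
    by_cases hbz : ∃ i, b i = 0
    · -- peel off an index with `b i₀ = 0`, `a i₀ > 0`
      obtain ⟨i₀, hbi⟩ := hbz
      have hai : 0 < a i₀ := by
        rcases lt_or_eq_of_le (ha i₀) with h | h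
        · exact h
        · exact absurd ⟨i₀, h.symm, hbi⟩ hab
      set a' : Fin m → ℝ := fun k => a (i₀.succAbove k) with ha'
      set b' : Fin m → ℝ := fun k => b (i₀.succAbove k) with hb'
      set c' : Fin m → ℝ := fun k => c k.succ with hc'
      set d' : Fin m → ℝ := fun k => d k.succ with hd'
      set D' : ℝ := D * c 0 / a i₀ with hD'
      have hD'0 : 0 ≤ D' := div_nonneg (mul_nonneg hD (hc 0)) hai.le
      have H' : ∀ T' : Finset (Fin m),
          ∏ k, (if k ∈ T' then a' k else b' k)
            ≤ D' * ∏ k : Fin m, (if (k : ℕ) < T'.card then c' k else d' k) := by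
        intro T'
        set T : Finset (Fin (m+1)) := insert i₀ (T'.map i₀.succAboveEmb) with hT
        have hnotmem : i₀ ∉ T'.map i₀.succAboveEmb := by
          rw [Finset.mem_map]
          rintro ⟨k, _, hk⟩
          exact Fin.succAbove_ne i₀ k hk
        have hcardT : T.card = T'.card + 1 := by
          rw [hT, Finset.card_insert_of_notMem hnotmem, Finset.card_map]
        have hmemT : ∀ k : Fin m, (i₀.succAbove k ∈ T ↔ k ∈ T') := by
          intro k
          rw [hT, Finset.mem_insert]
          constructor
          · rintro (h | h)
            · exact absurd h (Fin.succAbove_ne i₀ k)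
            · rw [Finset.mem_map] at h
              obtain ⟨k', hk', he⟩ := h
              have : k' = k := i₀.succAbove_right_injective (by exact he)
              rwa [← this]
          · intro h
            exact Or.inr (Finset.mem_map_of_mem _ h)
        have hL : ∏ i : Fin (m+1), (if i ∈ T then a i else b i)
            = a i₀ * ∏ k, (if k ∈ T' then a' k else b' k) := by
          rw [Fin.prod_univ_succAbove (fun i => if i ∈ T then a i else b i) i₀]
          congr 1
          · simp [hT]
          · refine Finset.prod_congr rfl fun k _ => ?_
            rw [ha', hb']
            by_cases h : k ∈ T' <;> simp [h, (hmemT k)]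
        have hR : ∏ i : Fin (m+1), (if (i : ℕ) < T.card then c i else d i)
            = c 0 * ∏ k : Fin m, (if (k : ℕ) < T'.card then c' k else d' k) := by
          rw [Fin.prod_univ_succ (fun i : Fin (m+1) => if (i : ℕ) < T.card then c i else d i)]
          congr 1
          · simp [hcardT]
          · refine Finset.prod_congr rfl fun k _ => ?_
            rw [hc', hd', hcardT]
            have : ((k.succ : Fin (m+1)) : ℕ) = (k : ℕ) + 1 := rfl
            rw [this]
            by_cases h : (k : ℕ) < T'.card <;> simp [h, Nat.succ_lt_succ_iff]
        have key := H T
        rw [hL, hR] at key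
        rw [hD']
        have hR0 : 0 ≤ ∏ k : Fin m, (if (k : ℕ) < T'.card then c' k else d' k) :=
          Finset.prod_nonneg fun k _ => by by_cases h : (k:ℕ) < T'.card <;>
            simp [h, hc', hd', hc k.succ, hd k.succ]
        rw [div_mul_eq_mul_div, le_div_iff₀ hai]
        calc (∏ k, (if k ∈ T' then a' k else b' k)) * a i₀
            = a i₀ * ∏ k, (if k ∈ T' then a' k else b' k) := by ring
          _ ≤ D * (c 0 * ∏ k : Fin m, (if (k : ℕ) < T'.card then c' k else d' k)) := key
          _ = D * c 0 * ∏ k : Fin m, (if (k : ℕ) < T'.card then c' k else d' k) := by ring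
      have hIH := IH D' a' b' c' d' hD'0 (fun k => ha _) (fun k => hb _)
        (fun k => hc _) (fun k => hd _) H'
      have hprodcd : 0 ≤ ∏ k : Fin m, (c' k + d' k) :=
        Finset.prod_nonneg fun k _ => by dsimp [c', d']; linarith [hc k.succ, hd k.succ]
      calc ∏ i : Fin (m+1), (a i + b i)
          = (a i₀ + b i₀) * ∏ k, (a' k + b' k) := by
            rw [Fin.prod_univ_succAbove (fun i => a i + b i) i₀]
        _ = a i₀ * ∏ k, (a' k + b' k) := by rw [hbi, add_zero]
        _ ≤ a i₀ * (D' * ∏ k, (c' k + d' k)) := by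
            refine mul_le_mul_of_nonneg_left hIH hai.le
        _ = D * c 0 * ∏ k, (c' k + d' k) := by
            rw [hD']; field_simp
        _ ≤ D * ((c 0 + d 0) * ∏ k, (c' k + d' k)) := by
            nlinarith [mul_nonneg (mul_nonneg hD hprodcd) (hd 0)]
        _ = D * ∏ i : Fin (m+1), (c i + d i) := by
            rw [Fin.prod_univ_succ (fun i => c i + d i)]
    · -- main case : all `b i > 0`
      push_neg at hbz
      have hbpos : ∀ i, 0 < b i := fun i => lt_of_le_of_ne (hb i) (Ne.symm (hbz i))
      have hbprod : 0 < ∏ i, b i := Finset.prod_pos fun i _ => hbpos i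
      have hE0 : ∏ i, b i ≤ D * ∏ i, d i := by simpa using H ∅
      have hDd : 0 < D * ∏ i, d i := lt_of_lt_of_le hbprod hE0
      have hdprod : 0 < ∏ i, d i := by
        rcases lt_or_eq_of_le (Finset.prod_nonneg fun i (_ : i ∈ Finset.univ) => hd i) with h | h
        · exact h
        · exfalso; rw [← h] at hDd; simp at hDd
      have hdpos : ∀ i, 0 < d i := by
        intro i
        rcases lt_or_eq_of_le (hd i) with h | h
        · exact h
        · exfalso
          have : ∏ i, d i = 0 := Finset.prod_eq_zero (Finset.mem_univ i) h.symm
          linarith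
      set r : Fin (m+1) → ℝ := fun i => a i / b i with hrdef
      have hr0 : ∀ i, 0 ≤ r i := fun i => div_nonneg (ha i) (hb i)
      set ρ : Equiv.Perm (Fin (m+1)) := Fin.revPerm.trans (Tuple.sort r) with hρ
      have hρval : ∀ i, ρ i = Tuple.sort r (Fin.revPerm i) := fun i => rfl
      have hρanti : ∀ i j : Fin (m+1), i ≤ j → r (ρ j) ≤ r (ρ i) := by
        intro i j hij
        rw [hρval, hρval]
        exact Tuple.monotone_sort r (by simpa [Fin.rev_le_rev] using hij :
          Fin.revPerm j ≤ Fin.revPerm i)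
      set E : ℝ := D * (∏ i, d i) / ∏ i, b i with hE
      have hE1 : 1 ≤ E := by
        rw [hE, le_div_iff₀ hbprod]; linarith
      set rt : ℕ → ℝ := fun i => if h : i < m + 1 then r (ρ ⟨i, h⟩) else 0 with hrt
      set st : ℕ → ℝ := fun k =>
        if h : k < m + 1 then (if k = 0 then E else 1) * (c ⟨k, h⟩ / d ⟨k, h⟩) else 0 with hst
      have hrt0 : ∀ i, 0 ≤ rt i := by
        intro i; rw [hrt]; dsimp only
        split
        · exact hr0 _
        · exact le_rfl
      have hst0 : ∀ i, 0 ≤ st i := by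
        intro i; rw [hst]; dsimp only
        split
        · refine mul_nonneg ?_ (div_nonneg (hc _) (hd _))
          split
          · linarith
          · norm_num
        · exact le_rfl
      have hrtanti : ∀ i j, i ≤ j → j < m + 1 → rt j ≤ rt i := by
        intro i j hij hj
        have hi : i < m + 1 := by omega
        rw [hrt]; dsimp only
        rw [dif_pos hj, dif_pos hi]
        exact hρanti ⟨i, hi⟩ ⟨j, hj⟩ hij
      -- the prefix hypothesis for lemR
      have hpre : ∀ k, k ≤ m + 1 →
          ∏ i ∈ Finset.range k, rt i ≤ ∏ i ∈ Finset.range k, st i := by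
        intro k hk
        rcases Nat.eq_zero_or_pos k with rfl | hkpos
        · simp
        obtain ⟨k', rfl⟩ : ∃ k', k = k' + 1 := ⟨k - 1, by omega⟩
        set k := k' + 1
        -- convert to products over `Fin k`
        have hLHS : ∏ i ∈ Finset.range k, rt i = ∏ i : Fin k, r (ρ (Fin.castLE hk i)) := by
          rw [← Fin.prod_univ_eq_prod_range]
          refine Finset.prod_congr rfl fun i _ => ?_
          rw [hrt]; dsimp only
          rw [dif_pos (lt_of_lt_of_le i.isLt hk)]
          rfl
        have hMk : ∏ i ∈ Finset.range k, st i
            = E * ∏ i : Fin k, (c (Fin.castLE hk i) / d (Fin.castLE hk i)) := by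
          rw [← Fin.prod_univ_eq_prod_range]
          have : ∀ i : Fin k, st (i : ℕ)
              = (if i = 0 then E else 1) * (c (Fin.castLE hk i) / d (Fin.castLE hk i)) := by
            intro i
            rw [hst]; dsimp only
            rw [dif_pos (lt_of_lt_of_le i.isLt hk)]
            have hcond : ((i : ℕ) = 0) ↔ (i = 0) := by
              rw [Fin.ext_iff]; simp
            by_cases h : i = 0
            · rw [if_pos (hcond.mpr h), if_pos h]; rfl
            · rw [if_neg (fun hh => h (hcond.mp hh)), if_neg h]; rfl
          rw [Finset.prod_congr rfl fun i _ => this i, Finset.prod_mul_distrib]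
          congr 1
          rw [Finset.prod_ite_eq' Finset.univ (0 : Fin k) (fun _ => E)]
          simp
        set T : Finset (Fin (m+1)) := Finset.image (fun i : Fin k => ρ (Fin.castLE hk i))
          Finset.univ with hT
        have hinj : Function.Injective (fun i : Fin k => ρ (Fin.castLE hk i)) := by
          intro x y hxy
          exact Fin.castLE_injective hk (ρ.injective hxy)
        have hcardT : T.card = k := by
          rw [hT, Finset.card_image_of_injective _ hinj, Finset.card_univ, Fintype.card_fin]
        have key := H T
        rw [hcardT] at key
        -- rewrite LHS of key
        have keyL : ∏ i, (if i ∈ T then a i else b i)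
            = (∏ i : Fin k, r (ρ (Fin.castLE hk i))) * ∏ i, b i := by
          have : ∀ i : Fin (m+1), (if i ∈ T then a i else b i)
              = (if i ∈ T then r i else 1) * b i := by
            intro i
            by_cases h : i ∈ T
            · rw [if_pos h, if_pos h, hrdef]; dsimp only
              rw [div_mul_cancel₀ _ (hbpos i).ne']
            · rw [if_neg h, if_neg h, one_mul]
          rw [Finset.prod_congr rfl fun i _ => this i, Finset.prod_mul_distrib]
          congr 1
          rw [← Finset.prod_filter, Finset.filter_mem_eq_inter, Finset.univ_inter, hT,
            Finset.prod_image fun x _ y _ h => hinj h]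
        have keyR : ∏ i : Fin (m+1), (if (i : ℕ) < k then c i else d i)
            = (∏ i : Fin k, (c (Fin.castLE hk i) / d (Fin.castLE hk i))) * ∏ i, d i := by
          have : ∀ i : Fin (m+1), (if (i : ℕ) < k then c i else d i)
              = (if (i : ℕ) < k then c i / d i else 1) * d i := by
            intro i
            by_cases h : (i : ℕ) < k
            · rw [if_pos h, if_pos h, div_mul_cancel₀ _ (hdpos i).ne']
            · rw [if_neg h, if_neg h, one_mul]
          rw [Finset.prod_congr rfl fun i _ => this i, Finset.prod_mul_distrib]
          congr 1
          rw [← Finset.prod_filter]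
          have himg : Finset.filter (fun i : Fin (m+1) => (i : ℕ) < k) Finset.univ
              = Finset.image (Fin.castLE hk) Finset.univ := by
            ext j
            simp only [Finset.mem_filter, Finset.mem_univ, true_and, Finset.mem_image]
            constructor
            · intro hj
              exact ⟨⟨(j : ℕ), hj⟩, Fin.ext rfl⟩
            · rintro ⟨i, rfl⟩
              simpa using i.isLt
          rw [himg, Finset.prod_image fun x _ y _ h => Fin.castLE_injective hk h]
        rw [keyL, keyR] at key
        rw [hLHS, hMk]
        -- from key : L * ∏b ≤ D * (M * ∏d), conclude L ≤ E * M
        rw [hE]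
        set L := ∏ i : Fin k, r (ρ (Fin.castLE hk i))
        set M := ∏ i : Fin k, (c (Fin.castLE hk i) / d (Fin.castLE hk i))
        rw [div_mul_eq_mul_div, le_div_iff₀ hbprod]
        calc L * ∏ i, b i ≤ D * (M * ∏ i, d i) := key
          _ = D * (∏ i, d i) * M := by ring
      -- apply lemR and convert back
      have main := lemR (m+1) rt st hrt0 hst0 hrtanti hpre
      have hbne := hbprod.ne'
      have hdne := hdprod.ne'
      have hL2 : ∏ i ∈ Finset.range (m+1), (1 + rt i) = (∏ i, (a i + b i)) / ∏ i, b i := by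
        rw [← Fin.prod_univ_eq_prod_range]
        have e1 : ∏ i : Fin (m+1), (1 + rt (i : ℕ)) = ∏ i : Fin (m+1), (1 + r (ρ i)) := by
          refine Finset.prod_congr rfl fun i _ => ?_
          rw [hrt]; dsimp only
          rw [dif_pos i.isLt]
        have e2 : ∏ i : Fin (m+1), (1 + r (ρ i)) = ∏ i : Fin (m+1), (1 + r i) :=
          Equiv.prod_comp ρ (fun i => 1 + r i)
        rw [e1, e2, ← Finset.prod_div_distrib]
        refine Finset.prod_congr rfl fun i _ => ?_
        rw [hrdef]; dsimp only
        have := (hbpos i).ne'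
        field_simp
        ring
      have hR2 : ∏ i ∈ Finset.range (m+1), (1 + st i)
          ≤ E * ((∏ i, (c i + d i)) / ∏ i, d i) := by
        rw [← Fin.prod_univ_eq_prod_range]
        have e1 : ∏ i : Fin (m+1), (1 + st (i : ℕ))
            = ∏ i : Fin (m+1), (1 + (if i = 0 then E else 1) * (c i / d i)) := by
          refine Finset.prod_congr rfl fun i _ => ?_
          rw [hst]; dsimp only
          rw [dif_pos i.isLt]
          have hcond : ((i : ℕ) = 0) ↔ (i = 0) := by
            rw [Fin.ext_iff]; simp
          by_cases h : i = 0
          · rw [if_pos (hcond.mpr h), if_pos h]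
          · rw [if_neg (fun hh => h (hcond.mp hh)), if_neg h]
        rw [e1]
        have e3 : ∏ i : Fin (m+1), (1 + (if i = 0 then E else 1) * (c i / d i))
            = (1 + E * (c 0 / d 0)) * ∏ i : Fin m, (1 + c i.succ / d i.succ) := by
          rw [Fin.prod_univ_succ (fun i : Fin (m+1) => 1 + (if i = 0 then E else 1) * (c i / d i))]
          rw [if_pos rfl]
          congr 1
          refine Finset.prod_congr rfl fun i _ => ?_
          rw [if_neg (Fin.succ_ne_zero i), one_mul]
        rw [e3]
        have e4 : ∏ i : Fin (m+1), (1 + c i / d i) = (1 + c 0 / d 0) * ∏ i : Fin m, (1 + c i.succ / d i.succ) :=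
          Fin.prod_univ_succ (fun i : Fin (m+1) => 1 + c i / d i)
        have e5 : ∏ i : Fin (m+1), (1 + c i / d i) = (∏ i, (c i + d i)) / ∏ i, d i := by
          rw [← Finset.prod_div_distrib]
          refine Finset.prod_congr rfl fun i _ => ?_
          have := (hdpos i).ne'
          field_simp
          ring
        have hprodnn : (0:ℝ) ≤ ∏ i : Fin m, (1 + c i.succ / d i.succ) :=
          Finset.prod_nonneg fun i _ => by
            have := div_nonneg (hc i.succ) (hd i.succ); linarith
        have hx0 : (0:ℝ) ≤ c 0 / d 0 := div_nonneg (hc 0) (hd 0)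
        calc (1 + E * (c 0 / d 0)) * ∏ i : Fin m, (1 + c i.succ / d i.succ)
            ≤ (E * (1 + c 0 / d 0)) * ∏ i : Fin m, (1 + c i.succ / d i.succ) := by
              refine mul_le_mul_of_nonneg_right ?_ hprodnn
              nlinarith [mul_nonneg (sub_nonneg.mpr hE1) hx0]
          _ = E * ((1 + c 0 / d 0) * ∏ i : Fin m, (1 + c i.succ / d i.succ)) := by ring
          _ = E * ((∏ i, (c i + d i)) / ∏ i, d i) := by rw [← e4, e5]
      have chain : (∏ i, (a i + b i)) / ∏ i, b i ≤ E * ((∏ i, (c i + d i)) / ∏ i, d i) := by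
        rw [← hL2]; exact le_trans main hR2
      calc ∏ i, (a i + b i) = ((∏ i, (a i + b i)) / ∏ i, b i) * ∏ i, b i := by field_simp
        _ ≤ (E * ((∏ i, (c i + d i)) / ∏ i, d i)) * ∏ i, b i :=
            mul_le_mul_of_nonneg_right chain hbprod.le
        _ = D * ∏ i, (c i + d i) := by rw [hE]; field_simp

/-- The sorted (level-set) tuple of a tuple of Boolean vectors. -/
def sortTup {I : Type*} {m : ℕ} (x : Fin m → I → Bool) (i : Fin m) (j : I) : Bool :=
  decide ((i : ℕ) < ((Finset.univ : Finset (Fin m)).filter (fun i' => x i' j = true)).card)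

/-- Multi-function Ahlswede–Daykin / Rinott–Saks–Aharoni–Keich theorem on `I → Bool`. -/
lemma ADm {I : Type*} [Fintype I] [DecidableEq I] (m : ℕ) (t : Finset I) :
    ∀ f g : Fin m → (I → Bool) → ℝ,
    (∀ i x, 0 ≤ f i x) → (∀ i x, 0 ≤ g i x) →
    (∀ i x, f i x ≠ 0 → ∀ j, x j = true → j ∈ t) →
    (∀ i x, g i x ≠ 0 → ∀ j, x j = true → j ∈ t) →
    (∀ x : Fin m → I → Bool, ∏ i, f i (x i) ≤ ∏ i, g i (sortTup x i)) →
    ∏ i, ∑ x : I → Bool, f i x ≤ ∏ i, ∑ x : I → Bool, g i x := by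
  induction t using Finset.induction_on with
  | empty =>
    intro f g hf0 hg0 hfs hgs H
    have hsum : ∀ (h : Fin m → (I → Bool) → ℝ),
        (∀ i x, h i x ≠ 0 → ∀ j, x j = true → j ∈ (∅ : Finset I)) →
        ∀ i, ∑ x : I → Bool, h i x = h i (fun _ => false) := by
      intro h hs i
      refine Fintype.sum_eq_single _ ?_
      intro x hx
      by_contra hne
      apply hx
      funext j
      cases hxj : x j
      · rfl
      · exact absurd (hs i x hne j hxj) (Finset.notMem_empty j)
    have hbot : sortTup (fun (_ : Fin m) (_ : I) => false) = fun _ _ => false := by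
      funext i j
      simp [sortTup]
    calc ∏ i, ∑ x : I → Bool, f i x = ∏ i, f i (fun _ => false) :=
          Finset.prod_congr rfl fun i _ => hsum f hfs i
      _ ≤ ∏ i, g i (sortTup (fun _ _ => false) i) := H (fun _ _ => false)
      _ = ∏ i, g i (fun _ => false) := by rw [hbot]
      _ ≤ ∏ i, ∑ x : I → Bool, g i x := by
          refine Finset.prod_le_prod (fun i _ => hg0 i _) fun i _ => ?_
          exact Finset.single_le_sum (fun x _ => hg0 i x) (Finset.mem_univ _)
  | @insert j₀ s hj₀ IH =>
    intro f g hf0 hg0 hfs hgs H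
    set F : Fin m → (I → Bool) → ℝ := fun i y =>
      if y j₀ = true then 0 else f i y + f i (Function.update y j₀ true) with hF
    set G : Fin m → (I → Bool) → ℝ := fun i y =>
      if y j₀ = true then 0 else g i y + g i (Function.update y j₀ true) with hG
    have hF0 : ∀ i y, 0 ≤ F i y := by
      intro i y
      rw [hF]; dsimp only
      split
      · exact le_rfl
      · exact add_nonneg (hf0 i y) (hf0 i _)
    have hG0 : ∀ i y, 0 ≤ G i y := by
      intro i y
      rw [hG]; dsimp only
      split
      · exact le_rfl
      · exact add_nonneg (hg0 i y) (hg0 i _)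
    have hsupp : ∀ (h H' : Fin m → (I → Bool) → ℝ),
        (H' = fun i y => if y j₀ = true then 0 else h i y + h i (Function.update y j₀ true)) →
        (∀ i x, h i x ≠ 0 → ∀ j, x j = true → j ∈ insert j₀ s) →
        ∀ i y, H' i y ≠ 0 → ∀ j, y j = true → j ∈ s := by
      intro h H' hH' hs i y hne j hyj
      rw [hH'] at hne; dsimp only at hne
      have hyj₀ : y j₀ ≠ true := by
        intro hcon
        rw [if_pos hcon] at hne
        exact hne rfl
      rw [if_neg hyj₀] at hne
      have hjne : j ≠ j₀ := by
        intro hcon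
        rw [hcon] at hyj
        exact hyj₀ hyj
      have : h i y ≠ 0 ∨ h i (Function.update y j₀ true) ≠ 0 := by
        by_contra hcon
        push_neg at hcon
        rw [hcon.1, hcon.2] at hne
        exact hne (by ring)
      rcases this with hh | hh
      · have := hs i y hh j hyj
        rcases Finset.mem_insert.mp this with h' | h'
        · exact absurd h' hjne
        · exact h'
      · have := hs i _ hh j (by rwa [Function.update_of_ne hjne])
        rcases Finset.mem_insert.mp this with h' | h'
        · exact absurd h' hjne
        · exact h'
    have hFs := hsupp f F hF hfs
    have hGs := hsupp g G hG hgs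
    -- sums are preserved
    have hsum : ∀ (h : (I → Bool) → ℝ),
        ∑ y : I → Bool, (if y j₀ = true then 0 else h y + h (Function.update y j₀ true))
          = ∑ y : I → Bool, h y := by
      intro h
      have hsplit : ∀ y : I → Bool,
          (if y j₀ = true then 0 else h y + h (Function.update y j₀ true))
            = (if y j₀ = true then 0 else h y)
              + (if y j₀ = true then 0 else h (Function.update y j₀ true)) := by
        intro y
        by_cases hy : y j₀ = true <;> simp [hy]
      rw [Finset.sum_congr rfl fun y _ => hsplit y, Finset.sum_add_distrib]
      have einv : Function.Involutive
          (fun y : I → Bool => Function.update y j₀ (!(y j₀))) := by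
        intro y
        funext j
        by_cases hj : j = j₀
        · subst hj; simp
        · simp [Function.update_of_ne hj]
      set e := einv.toPerm _ with he
      have hsecond : ∑ y : I → Bool, (if y j₀ = true then 0 else h (Function.update y j₀ true))
          = ∑ y : I → Bool, (if y j₀ = true then h y else 0) := by
        rw [← Equiv.sum_comp e
          (fun y : I → Bool => if y j₀ = true then 0 else h (Function.update y j₀ true))]
        refine Finset.sum_congr rfl fun y _ => ?_
        have he1 : e y j₀ = !(y j₀) := by simp [he, Function.Involutive.toPerm]
        have he2 : Function.update (e y) j₀ true = Function.update y j₀ true := by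
          funext j
          by_cases hj : j = j₀
          · subst hj; simp
          · simp [Function.update_of_ne hj, he, Function.Involutive.toPerm,
              Function.update_of_ne hj]
        rw [he1, he2]
        cases hy : y j₀
        · simp
        · have : Function.update y j₀ true = y := by
            funext j
            by_cases hj : j = j₀
            · subst hj; simp [hy]
            · simp [Function.update_of_ne hj]
          simp [this]
      rw [hsecond, ← Finset.sum_add_distrib]
      refine Finset.sum_congr rfl fun y _ => ?_
      cases hy : y j₀ <;> simp [hy]
    -- hypothesis for (F, G)
    have HFG : ∀ y : Fin m → I → Bool, ∏ i, F i (y i) ≤ ∏ i, G i (sortTup y i) := by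
      intro y
      by_cases hy : ∀ i, y i j₀ = false
      · -- main case
        have hcnt : ∀ i : Fin m, sortTup y i j₀ = false := by
          intro i
          have : (Finset.univ.filter (fun i' : Fin m => y i' j₀ = true)) = ∅ := by
            refine Finset.filter_eq_empty_iff.mpr fun i' _ => by rw [hy i']; simp
          simp [sortTup, this]
        set a : Fin m → ℝ := fun i => f i (Function.update (y i) j₀ true) with hadef
        set b : Fin m → ℝ := fun i => f i (y i) with hbdef
        set c : Fin m → ℝ := fun i => g i (Function.update (sortTup y i) j₀ true) with hcdef
        set d : Fin m → ℝ := fun i => g i (sortTup y i) with hddef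
        have HT : ∀ T : Finset (Fin m),
            ∏ i, (if i ∈ T then a i else b i)
              ≤ (1:ℝ) * ∏ i : Fin m, (if (i : ℕ) < T.card then c i else d i) := by
          intro T
          rw [one_mul]
          set x : Fin m → I → Bool := fun i => Function.update (y i) j₀ (decide (i ∈ T)) with hx
          have hLx : ∀ i, (if i ∈ T then a i else b i) = f i (x i) := by
            intro i
            by_cases hiT : i ∈ T
            · rw [if_pos hiT, hadef, hx]
              simp [hiT]
            · rw [if_neg hiT, hbdef, hx]
              dsimp only
              have : Function.update (y i) j₀ (decide (i ∈ T)) = y i := by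
                funext j
                by_cases hj : j = j₀
                · subst hj; simp [hiT, hy i]
                · simp [Function.update_of_ne hj]
              rw [this]
          have hsort : ∀ i, sortTup x i = Function.update (sortTup y i) j₀
              (decide ((i : ℕ) < T.card)) := by
            intro i
            funext j
            by_cases hj : j = j₀
            · rw [hj, Function.update_self]
              have hfilter : (Finset.univ.filter (fun i' : Fin m => x i' j₀ = true)) = T := by
                ext i'
                simp [hx]
              simp [sortTup, hfilter]
            · rw [Function.update_of_ne hj]
              have : ∀ i' : Fin m, x i' j = y i' j := by
                intro i'
                rw [hx]; dsimp only
                rw [Function.update_of_ne hj]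
              simp only [sortTup, this]
          have hRx : ∀ i, g i (sortTup x i) = (if (i : ℕ) < T.card then c i else d i) := by
            intro i
            rw [hsort i]
            by_cases hiT : (i : ℕ) < T.card
            · rw [if_pos hiT, hcdef]
              simp [hiT]
            · rw [if_neg hiT]
              have : Function.update (sortTup y i) j₀ (decide ((i:ℕ) < T.card))
                  = sortTup y i := by
                funext j
                by_cases hj : j = j₀
                · subst hj; simp [hiT, hcnt i]
                · simp [Function.update_of_ne hj]
              rw [this, hddef]
          calc ∏ i, (if i ∈ T then a i else b i) = ∏ i, f i (x i) :=
                Finset.prod_congr rfl fun i _ => hLx i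
            _ ≤ ∏ i, g i (sortTup x i) := H x
            _ = ∏ i : Fin m, (if (i : ℕ) < T.card then c i else d i) :=
                Finset.prod_congr rfl fun i _ => hRx i
        have := lemBool m 1 a b c d (by norm_num) (fun i => hf0 i _) (fun i => hf0 i _)
          (fun i => hg0 i _) (fun i => hg0 i _) HT
        rw [one_mul] at this
        calc ∏ i, F i (y i) = ∏ i, (a i + b i) := by
              refine Finset.prod_congr rfl fun i _ => ?_
              rw [hF]; dsimp only
              rw [if_neg (by rw [hy i]; simp : ¬ (y i j₀ = true))]
              rw [hadef, hbdef]; ring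
          _ ≤ ∏ i, (c i + d i) := this
          _ = ∏ i, G i (sortTup y i) := by
              refine Finset.prod_congr rfl fun i _ => ?_
              rw [hG]; dsimp only
              rw [if_neg (by rw [hcnt i]; simp : ¬ (sortTup y i j₀ = true))]
              rw [hcdef, hddef]; ring
      · push_neg at hy
        obtain ⟨i₀, hi₀⟩ := hy
        have hzero : F i₀ (y i₀) = 0 := by
          rw [hF]; dsimp only
          rw [if_pos (by simp [Bool.not_eq_false] at hi₀; exact hi₀)]
        calc ∏ i, F i (y i) = 0 := Finset.prod_eq_zero (Finset.mem_univ i₀) hzero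
          _ ≤ ∏ i, G i (sortTup y i) := Finset.prod_nonneg fun i _ => hG0 i _
    have hmain := IH F G hF0 hG0 hFs hGs HFG
    calc ∏ i, ∑ x : I → Bool, f i x = ∏ i, ∑ y : I → Bool, F i y :=
          Finset.prod_congr rfl fun i _ => (hsum (f i)).symm
      _ ≤ ∏ i, ∑ y : I → Bool, G i y := hmain
      _ = ∏ i, ∑ x : I → Bool, g i x :=
          Finset.prod_congr rfl fun i _ => hsum (g i)


set_option maxHeartbeats 1000000 in
/-- correlation inequality of Rinott–Saks, Corollary 5 of the paper.
Let `𝓐_1, …, 𝓐_m` be nonempty families of subsets of a finite set `X`. For `k ∈ [m]`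
let `𝓑_k` consist of all sets `⋃_S c_S`, where `S` ranges over the `k`-element subsets
of `[m]` and `c_S ∈ ⋀_{s ∈ S} 𝓐_s` (an intersection of one member from each `𝓐_s`,
`s ∈ S`). Then `Π_k |𝓐_k| ≤ Π_k |𝓑_k|`. -/
theorem rinott_saks {α : Type*} [Fintype α] [DecidableEq α] (m : ℕ)
    (𝓐 : Fin m → Finset (Finset α)) (hne : ∀ k, (𝓐 k).Nonempty) :
    ∏ k, (𝓐 k).card ≤
      ∏ k : Fin m,
        {U : Finset α | ∃ g : Finset (Fin m) → Finset α,
          (∀ S ∈ Finset.univ.powersetCard ((k : ℕ) + 1),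
            ∃ f : Fin m → Finset α, (∀ s ∈ S, f s ∈ 𝓐 s) ∧ g S = S.inf f) ∧
          U = (Finset.univ.powersetCard ((k : ℕ) + 1)).sup g}.ncard := by
  classical
  set Bset : Fin m → Set (Finset α) := fun k =>
    {U : Finset α | ∃ g : Finset (Fin m) → Finset α,
      (∀ S ∈ Finset.univ.powersetCard ((k : ℕ) + 1),
        ∃ f : Fin m → Finset α, (∀ s ∈ S, f s ∈ 𝓐 s) ∧ g S = S.inf f) ∧
      U = (Finset.univ.powersetCard ((k : ℕ) + 1)).sup g} with hBset
  show ∏ k, (𝓐 k).card ≤ ∏ k : Fin m, (Bset k).ncard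
  set toFs : (α → Bool) → Finset α := fun x => Finset.univ.filter (fun a => x a = true)
    with htoFs
  set f : Fin m → (α → Bool) → ℝ := fun i x => if toFs x ∈ 𝓐 i then 1 else 0 with hf
  set g : Fin m → (α → Bool) → ℝ := fun k x => if toFs x ∈ Bset k then 1 else 0 with hg
  have hf0 : ∀ i x, 0 ≤ f i x := by
    intro i x; rw [hf]; dsimp only; split <;> norm_num
  have hg0 : ∀ k x, 0 ≤ g k x := by
    intro k x; rw [hg]; dsimp only; split <;> norm_num
  -- membership of inf
  have hmeminf : ∀ (S : Finset (Fin m)) (A : Fin m → Finset α) (aelem : α),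
      aelem ∈ S.inf A ↔ ∀ i ∈ S, aelem ∈ A i := by
    intro S A aelem
    constructor
    · intro h i hi
      exact Finset.mem_of_subset (Finset.le_iff_subset.mp (Finset.inf_le hi)) h
    · intro h
      have : {aelem} ≤ S.inf A :=
        Finset.le_inf fun i hi => Finset.singleton_subset_iff.mpr (h i hi)
      exact Finset.singleton_subset_iff.mp this
  -- main hypothesis
  have H : ∀ x : Fin m → α → Bool, ∏ i, f i (x i) ≤ ∏ i, g i (sortTup x i) := by
    intro x
    by_cases hall : ∀ i, toFs (x i) ∈ 𝓐 i
    · have hmem : ∀ k : Fin m, toFs (sortTup x k) ∈ Bset k := by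
        intro k
        set A : Fin m → Finset α := fun i => toFs (x i) with hA
        rw [hBset]
        dsimp only
        rw [Set.mem_setOf_eq]
        refine ⟨fun S => S.inf A, fun S _ => ⟨A, fun s _ => hall s, rfl⟩, ?_⟩
        ext aelem
        rw [htoFs]
        simp only [Finset.mem_filter, Finset.mem_univ, true_and, sortTup,
          decide_eq_true_eq]
        have hfilteq : Finset.univ.filter (fun i => x i aelem = true)
            = Finset.univ.filter (fun i => aelem ∈ A i) := by
          refine Finset.filter_congr fun i _ => ?_
          rw [hA]; dsimp only
          rw [htoFs]
          simp
        rw [hfilteq]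
        constructor
        · intro hcard
          obtain ⟨S, hSsub, hScard⟩ := Finset.exists_subset_card_eq
            (by omega : (k:ℕ)+1 ≤ (Finset.univ.filter (fun i => aelem ∈ A i)).card)
          refine Finset.mem_sup.mpr ⟨S, ?_, ?_⟩
          · exact Finset.mem_powersetCard.mpr ⟨Finset.subset_univ S, hScard⟩
          · exact (hmeminf S A aelem).mpr fun i hi =>
              (Finset.mem_filter.mp (hSsub hi)).2
        · intro hsup
          obtain ⟨S, hS, hainf⟩ := Finset.mem_sup.mp hsup
          obtain ⟨-, hScard⟩ := Finset.mem_powersetCard.mp hS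
          have hsub : S ⊆ Finset.univ.filter (fun i => aelem ∈ A i) := fun i hi =>
            Finset.mem_filter.mpr ⟨Finset.mem_univ i, (hmeminf S A aelem).mp hainf i hi⟩
          have := Finset.card_le_card hsub
          omega
      have hL : ∏ i, f i (x i) = 1 := by
        refine Finset.prod_eq_one fun i _ => ?_
        rw [hf]; dsimp only; rw [if_pos (hall i)]
      have hR : ∏ i, g i (sortTup x i) = 1 := by
        refine Finset.prod_eq_one fun i _ => ?_
        rw [hg]; dsimp only; rw [if_pos (hmem i)]
      rw [hL, hR]
    · push_neg at hall
      obtain ⟨i₀, hi₀⟩ := hall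
      have : f i₀ (x i₀) = 0 := by
        rw [hf]; dsimp only; rw [if_neg hi₀]
      calc ∏ i, f i (x i) = 0 := Finset.prod_eq_zero (Finset.mem_univ i₀) this
        _ ≤ _ := Finset.prod_nonneg fun i _ => hg0 i _
  have main := ADm m Finset.univ f g hf0 hg0
    (fun i x _ j _ => Finset.mem_univ j) (fun i x _ j _ => Finset.mem_univ j) H
  -- compute the sums
  have hleft : ∀ x : α → Bool, (fun a => decide (a ∈ toFs x)) = x := by
    intro x
    funext a
    rw [htoFs]
    cases hxa : x a <;> simp [hxa]
  have hright : ∀ A : Finset α, toFs (fun a => decide (a ∈ A)) = A := by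
    intro A
    ext a
    rw [htoFs]
    simp
  set e : (α → Bool) ≃ Finset α :=
    ⟨toFs, fun A a => decide (a ∈ A), hleft, hright⟩ with he
  have hsumf : ∀ i, ∑ x : α → Bool, f i x = ((𝓐 i).card : ℝ) := by
    intro i
    rw [Fintype.sum_equiv e (fun x => f i x) (fun A => if A ∈ 𝓐 i then (1:ℝ) else 0)
      (fun x => rfl)]
    rw [Finset.sum_ite_mem, Finset.univ_inter, Finset.sum_const, nsmul_eq_mul, mul_one]
  have hsumg : ∀ k, ∑ x : α → Bool, g k x = ((Bset k).ncard : ℝ) := by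
    intro k
    rw [Fintype.sum_equiv e (fun x => g k x) (fun A => if A ∈ Bset k then (1:ℝ) else 0)
      (fun x => rfl)]
    rw [Set.ncard_eq_toFinset_card', Set.toFinset_setOf, Finset.card_filter]
    push_cast
    rfl
  rw [Finset.prod_congr rfl fun i _ => hsumf i, Finset.prod_congr rfl fun k _ => hsumg k]
    at main
  exact_mod_cast main
end

section
/- For every tournament T on 6 vertices, the number r(T) of unordered pairs of distinct vertices possessing a common in-neighbor is at most 14 (that is, at most C(6,2) − 1; some pair of distinct vertices has no common in-neighbor). -/
/-- A tournament on `Fin ℓ`, given by an arc function: no loops, and for distinct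
vertices exactly one of the two arcs is present. -/
def IsTournament {ℓ : ℕ} (E : Fin ℓ → Fin ℓ → Bool) : Prop :=
  (∀ u, E u u = false) ∧ ∀ u v : Fin ℓ, u ≠ v → (E u v = true ↔ E v u = false)

/-- `r(T)`: the number of unordered pairs of distinct vertices having a common
in-neighbor. -/
def commonInNbrPairs {ℓ : ℕ} (E : Fin ℓ → Fin ℓ → Bool) : ℕ :=
  ((Finset.univ : Finset (Fin ℓ × Fin ℓ)).filter
    (fun p => p.1 < p.2 ∧ ∃ w, E w p.1 = true ∧ E w p.2 = true)).card

/-- If some pair `u < v` has no common in-neighbor, then at most 14 of the 15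
pairs can have one. -/
lemma card_bound (E : Fin 6 → Fin 6 → Bool) (u v : Fin 6) (huv : u < v)
    (h : ∀ w, ¬(E w u = true ∧ E w v = true)) : commonInNbrPairs E ≤ 14 := by
  unfold commonInNbrPairs
  have hsub : ((Finset.univ : Finset (Fin 6 × Fin 6)).filter
      (fun p => p.1 < p.2 ∧ ∃ w, E w p.1 = true ∧ E w p.2 = true)) ⊆
      ((Finset.univ : Finset (Fin 6 × Fin 6)).filter (fun p => p.1 < p.2)).erase (u, v) := by
    intro p hp
    simp only [Finset.mem_filter, Finset.mem_univ, true_and] at hp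
    refine Finset.mem_erase.mpr ⟨?_, by simp [hp.1]⟩
    rintro rfl
    obtain ⟨w, hw⟩ := hp.2
    exact h w hw
  have h15 : ((Finset.univ : Finset (Fin 6 × Fin 6)).filter (fun p => p.1 < p.2)).card = 15 := by
    decide
  have := Finset.card_le_card hsub
  rw [Finset.card_erase_of_mem (by simp [huv]), h15] at this
  omega

/-- Boolean formula: some pair of the 15 has no common in-neighbor.  Bit `b(idx u v)`
(for `u < v`) records the arc `u → v`. -/
def goodF (b0 b1 b2 b3 b4 b5 b6 b7 b8 b9 b10 b11 b12 b13 b14 : Bool) : Bool :=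
  (!((!b1) && (!b2)) && !((!b3) && (!b4)) && !((!b6) && (!b7)) && !((!b10) && (!b11))) ||
  (!((!b0) && b2) && !((!b3) && (!b5)) && !((!b6) && (!b8)) && !((!b10) && (!b12))) ||
  (!(b0 && b1) && !((!b4) && (!b5)) && !((!b7) && (!b8)) && !((!b11) && (!b12))) ||
  (!((!b0) && b4) && !((!b1) && b5) && !((!b6) && (!b9)) && !((!b10) && (!b13))) ||
  (!(b0 && b3) && !((!b2) && b5) && !((!b7) && (!b9)) && !((!b11) && (!b13))) ||
  (!(b1 && b3) && !(b2 && b4) && !((!b8) && (!b9)) && !((!b12) && (!b13))) ||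
  (!((!b0) && b7) && !((!b1) && b8) && !((!b3) && b9) && !((!b10) && (!b14))) ||
  (!(b0 && b6) && !((!b2) && b8) && !((!b4) && b9) && !((!b11) && (!b14))) ||
  (!(b1 && b6) && !(b2 && b7) && !((!b5) && b9) && !((!b12) && (!b14))) ||
  (!(b3 && b6) && !(b4 && b7) && !(b5 && b8) && !((!b13) && (!b14))) ||
  (!((!b0) && b11) && !((!b1) && b12) && !((!b3) && b13) && !((!b6) && b14)) ||
  (!(b0 && b10) && !((!b2) && b12) && !((!b4) && b13) && !((!b7) && b14)) ||
  (!(b1 && b10) && !(b2 && b11) && !((!b5) && b13) && !((!b8) && b14)) ||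
  (!(b3 && b10) && !(b4 && b11) && !(b5 && b12) && !((!b9) && b14)) ||
  (!(b6 && b10) && !(b7 && b11) && !(b8 && b12) && !(b9 && b13))

set_option maxRecDepth 10000 in
theorem keyF : ∀ b0 b1 b2 b3 b4 b5 b6 b7 b8 b9 b10 b11 b12 b13 b14 : Bool, goodF b0 b1 b2 b3 b4 b5 b6 b7 b8 b9 b10 b11 b12 b13 b14 = true := by decide +kernel

/-- Every tournament on 6 vertices has at most `C(6,2) − 1 = 14`
pairs of distinct vertices with a common in-neighbor. -/
theorem tournament_six (E : Fin 6 → Fin 6 → Bool) (hE : IsTournament E) :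
    commonInNbrPairs E ≤ 14 := by
  obtain ⟨hloop, hiff⟩ := hE
  have hlow : ∀ a b : Fin 6, b < a → (E a b = true ↔ E b a = false) :=
    fun a b hba => hiff a b (ne_of_gt hba)
  have h := keyF (E 0 1) (E 0 2) (E 1 2) (E 0 3) (E 1 3) (E 2 3) (E 0 4) (E 1 4) (E 2 4) (E 3 4) (E 0 5) (E 1 5) (E 2 5) (E 3 5) (E 4 5)
  unfold goodF at h
  simp only [Bool.not_and, Bool.or_eq_true, Bool.and_eq_true, Bool.not_eq_true',
    Bool.not_eq_false'] at h
  have hw : ∀ w : Fin 6, w = 0 ∨ w = 1 ∨ w = 2 ∨ w = 3 ∨ w = 4 ∨ w = 5 := by decide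
  rcases h with ((((((((((((((h|h)|h)|h)|h)|h)|h)|h)|h)|h)|h)|h)|h)|h)|h)
  · exact card_bound E 0 1 (by decide) (by
      intro w
      rcases hw w with rfl|rfl|rfl|rfl|rfl|rfl <;> rintro ⟨h1, h2⟩ <;>
        (first
          | simp [hloop] at h1
          | simp [hloop] at h2
          | ((try rw [hlow _ _ (by decide)] at h1);
             (try rw [hlow _ _ (by decide)] at h2);
             simp [h1, h2] at h)))
  · exact card_bound E 0 2 (by decide) (by
      intro w
      rcases hw w with rfl|rfl|rfl|rfl|rfl|rfl <;> rintro ⟨h1, h2⟩ <;>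
        (first
          | simp [hloop] at h1
          | simp [hloop] at h2
          | ((try rw [hlow _ _ (by decide)] at h1);
             (try rw [hlow _ _ (by decide)] at h2);
             simp [h1, h2] at h)))
  · exact card_bound E 1 2 (by decide) (by
      intro w
      rcases hw w with rfl|rfl|rfl|rfl|rfl|rfl <;> rintro ⟨h1, h2⟩ <;>
        (first
          | simp [hloop] at h1
          | simp [hloop] at h2
          | ((try rw [hlow _ _ (by decide)] at h1);
             (try rw [hlow _ _ (by decide)] at h2);
             simp [h1, h2] at h)))
  · exact card_bound E 0 3 (by decide) (by
      intro w
      rcases hw w with rfl|rfl|rfl|rfl|rfl|rfl <;> rintro ⟨h1, h2⟩ <;>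
        (first
          | simp [hloop] at h1
          | simp [hloop] at h2
          | ((try rw [hlow _ _ (by decide)] at h1);
             (try rw [hlow _ _ (by decide)] at h2);
             simp [h1, h2] at h)))
  · exact card_bound E 1 3 (by decide) (by
      intro w
      rcases hw w with rfl|rfl|rfl|rfl|rfl|rfl <;> rintro ⟨h1, h2⟩ <;>
        (first
          | simp [hloop] at h1
          | simp [hloop] at h2
          | ((try rw [hlow _ _ (by decide)] at h1);
             (try rw [hlow _ _ (by decide)] at h2);
             simp [h1, h2] at h)))
  · exact card_bound E 2 3 (by decide) (by
      intro w
      rcases hw w with rfl|rfl|rfl|rfl|rfl|rfl <;> rintro ⟨h1, h2⟩ <;>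
        (first
          | simp [hloop] at h1
          | simp [hloop] at h2
          | ((try rw [hlow _ _ (by decide)] at h1);
             (try rw [hlow _ _ (by decide)] at h2);
             simp [h1, h2] at h)))
  · exact card_bound E 0 4 (by decide) (by
      intro w
      rcases hw w with rfl|rfl|rfl|rfl|rfl|rfl <;> rintro ⟨h1, h2⟩ <;>
        (first
          | simp [hloop] at h1
          | simp [hloop] at h2
          | ((try rw [hlow _ _ (by decide)] at h1);
             (try rw [hlow _ _ (by decide)] at h2);
             simp [h1, h2] at h)))
  · exact card_bound E 1 4 (by decide) (by
      intro w
      rcases hw w with rfl|rfl|rfl|rfl|rfl|rfl <;> rintro ⟨h1, h2⟩ <;>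
        (first
          | simp [hloop] at h1
          | simp [hloop] at h2
          | ((try rw [hlow _ _ (by decide)] at h1);
             (try rw [hlow _ _ (by decide)] at h2);
             simp [h1, h2] at h)))
  · exact card_bound E 2 4 (by decide) (by
      intro w
      rcases hw w with rfl|rfl|rfl|rfl|rfl|rfl <;> rintro ⟨h1, h2⟩ <;>
        (first
          | simp [hloop] at h1
          | simp [hloop] at h2
          | ((try rw [hlow _ _ (by decide)] at h1);
             (try rw [hlow _ _ (by decide)] at h2);
             simp [h1, h2] at h)))
  · exact card_bound E 3 4 (by decide) (by
      intro w
      rcases hw w with rfl|rfl|rfl|rfl|rfl|rfl <;> rintro ⟨h1, h2⟩ <;>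
        (first
          | simp [hloop] at h1
          | simp [hloop] at h2
          | ((try rw [hlow _ _ (by decide)] at h1);
             (try rw [hlow _ _ (by decide)] at h2);
             simp [h1, h2] at h)))
  · exact card_bound E 0 5 (by decide) (by
      intro w
      rcases hw w with rfl|rfl|rfl|rfl|rfl|rfl <;> rintro ⟨h1, h2⟩ <;>
        (first
          | simp [hloop] at h1
          | simp [hloop] at h2
          | ((try rw [hlow _ _ (by decide)] at h1);
             (try rw [hlow _ _ (by decide)] at h2);
             simp [h1, h2] at h)))
  · exact card_bound E 1 5 (by decide) (by
      intro w
      rcases hw w with rfl|rfl|rfl|rfl|rfl|rfl <;> rintro ⟨h1, h2⟩ <;>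
        (first
          | simp [hloop] at h1
          | simp [hloop] at h2
          | ((try rw [hlow _ _ (by decide)] at h1);
             (try rw [hlow _ _ (by decide)] at h2);
             simp [h1, h2] at h)))
  · exact card_bound E 2 5 (by decide) (by
      intro w
      rcases hw w with rfl|rfl|rfl|rfl|rfl|rfl <;> rintro ⟨h1, h2⟩ <;>
        (first
          | simp [hloop] at h1
          | simp [hloop] at h2
          | ((try rw [hlow _ _ (by decide)] at h1);
             (try rw [hlow _ _ (by decide)] at h2);
             simp [h1, h2] at h)))
  · exact card_bound E 3 5 (by decide) (by
      intro w
      rcases hw w with rfl|rfl|rfl|rfl|rfl|rfl <;> rintro ⟨h1, h2⟩ <;>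
        (first
          | simp [hloop] at h1
          | simp [hloop] at h2
          | ((try rw [hlow _ _ (by decide)] at h1);
             (try rw [hlow _ _ (by decide)] at h2);
             simp [h1, h2] at h)))
  · exact card_bound E 4 5 (by decide) (by
      intro w
      rcases hw w with rfl|rfl|rfl|rfl|rfl|rfl <;> rintro ⟨h1, h2⟩ <;>
        (first
          | simp [hloop] at h1
          | simp [hloop] at h2
          | ((try rw [hlow _ _ (by decide)] at h1);
             (try rw [hlow _ _ (by decide)] at h2);
             simp [h1, h2] at h)))
end

section
/- For every integer ℓ ≥ 24 there exists a tournament on ℓ vertices in which every pair of distinct vertices has a common in-neighbor (equivalently, r(T) = C(ℓ,2)). -/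
def EveryPairDominated {n : ℕ} (E : Fin n → Fin n → Bool) : Prop :=
  ∀ u v : Fin n, u ≠ v → ∃ w : Fin n, E w u = true ∧ E w v = true

lemma EveryPairDominated.exists_inNeighbor {n : ℕ} {E : Fin n → Fin n → Bool}
    (hE : EveryPairDominated E) (hn : 2 ≤ n) (u : Fin n) : ∃ w, E w u = true := by
  obtain ⟨v, hv⟩ : ∃ v : Fin n, u ≠ v :=
    ⟨if (u : ℕ) = 0 then ⟨1, hn⟩ else ⟨0, by omega⟩, by split_ifs <;> simp [Fin.ext_iff, *]⟩
  obtain ⟨w, hwu, -⟩ := hE u v hv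
  exact ⟨w, hwu⟩

def paley7 (a b : Fin 7) : Bool :=
  decide (b - a ∈ ({1, 2, 4} : Finset (Fin 7)))

lemma isTournament_paley7 : IsTournament paley7 := by
  unfold IsTournament paley7; decide

lemma everyPairDominated_paley7 : EveryPairDominated paley7 := by
  unfold EveryPairDominated paley7; decide

section PadTransitive

variable {m : ℕ} (E : Fin m → Fin m → Bool) (ℓ : ℕ)

def padTransitive (u v : Fin ℓ) : Bool :=
  if h : (u : ℕ) < m ∧ (v : ℕ) < m then E ⟨u, h.1⟩ ⟨v, h.2⟩ else decide (u < v)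

variable {E ℓ}

lemma padTransitive_of_lt {u v : Fin ℓ} (hu : (u : ℕ) < m) (hv : (v : ℕ) < m) :
    padTransitive E ℓ u v = E ⟨u, hu⟩ ⟨v, hv⟩ := by
  simp [padTransitive, hu, hv]

lemma padTransitive_of_not_lt {u v : Fin ℓ} (h : ¬((u : ℕ) < m ∧ (v : ℕ) < m)) :
    padTransitive E ℓ u v = decide (u < v) := by
  simp [padTransitive, h]

lemma isTournament_padTransitive (hE : IsTournament E) : IsTournament (padTransitive E ℓ) := by
  refine ⟨fun u => ?_, fun u v huv => ?_⟩
  · by_cases hu : (u : ℕ) < m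
    · rw [padTransitive_of_lt hu hu]; exact hE.1 _
    · rw [padTransitive_of_not_lt (by tauto)]; simp
  · by_cases h : (u : ℕ) < m ∧ (v : ℕ) < m
    · rw [padTransitive_of_lt h.1 h.2, padTransitive_of_lt h.2 h.1]
      exact hE.2 _ _ (by simpa [Fin.ext_iff] using huv)
    · rw [padTransitive_of_not_lt h, padTransitive_of_not_lt (by tauto)]
      simp only [decide_eq_true_eq, decide_eq_false_iff_not, not_lt]
      exact ⟨le_of_lt, fun h => lt_of_le_of_ne h huv⟩

lemma padTransitive_castLE (hmℓ : m ≤ ℓ) (w u : Fin m) :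
    padTransitive E ℓ (Fin.castLE hmℓ w) (Fin.castLE hmℓ u) = E w u :=
  padTransitive_of_lt w.isLt u.isLt

lemma padTransitive_of_lt_of_le {w v : Fin ℓ} (hw : (w : ℕ) < m) (hv : m ≤ (v : ℕ)) :
    padTransitive E ℓ w v = true := by
  rw [padTransitive_of_not_lt (by omega)]
  exact decide_eq_true (Fin.lt_def.2 (by omega))

lemma everyPairDominated_padTransitive (hE : EveryPairDominated E) (hm : 2 ≤ m) (hmℓ : m ≤ ℓ) :
    EveryPairDominated (padTransitive E ℓ) := by
  have dominated_with_new (u : Fin m) {v : Fin ℓ} (hv : m ≤ (v : ℕ)) :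
      ∃ w, padTransitive E ℓ w (Fin.castLE hmℓ u) = true ∧ padTransitive E ℓ w v = true := by
    obtain ⟨w, hwu⟩ := hE.exists_inNeighbor hm u
    exact ⟨Fin.castLE hmℓ w, by rwa [padTransitive_castLE], padTransitive_of_lt_of_le w.isLt hv⟩
  intro u v huv
  by_cases hu : (u : ℕ) < m <;> by_cases hv : (v : ℕ) < m
  · obtain ⟨w, hwu, hwv⟩ := hE ⟨u, hu⟩ ⟨v, hv⟩ (by simpa [Fin.ext_iff] using huv)
    exact ⟨Fin.castLE hmℓ w, padTransitive_castLE hmℓ w ⟨u, hu⟩ ▸ hwu,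
      padTransitive_castLE hmℓ w ⟨v, hv⟩ ▸ hwv⟩
  · exact dominated_with_new ⟨u, hu⟩ (by omega)
  · obtain ⟨w, hwv, hwu⟩ := dominated_with_new ⟨v, hv⟩ (v := u) (by omega)
    exact ⟨w, hwu, hwv⟩
  · exact ⟨⟨0, by omega⟩, padTransitive_of_lt_of_le (show 0 < m by omega) (by omega),
      padTransitive_of_lt_of_le (show 0 < m by omega) (by omega)⟩

end PadTransitive

/-- For every `ℓ ≥ 24` there is a tournament on `ℓ` vertices in
which every pair of distinct vertices has a common in-neighbor. -/
theorem tournament_every_pair_dominated (ℓ : ℕ) (hℓ : 24 ≤ ℓ) :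
    ∃ E : Fin ℓ → Fin ℓ → Bool, IsTournament E ∧
      ∀ u v : Fin ℓ, u ≠ v → ∃ w : Fin ℓ, E w u = true ∧ E w v = true :=
  ⟨padTransitive paley7 ℓ, isTournament_padTransitive isTournament_paley7,
    everyPairDominated_padTransitive everyPairDominated_paley7 (by norm_num) (by omega)⟩
end
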